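/- arXiv:2005.06042 — 7 statements merged into one kernel-verified Lean document; each statement's English description precedes it below -/
import Mathlib

section
/- Let T > 0 and 0 < γ ≤ Γ ≤ T, and let δ ∈ D be such that δ² is integrable on [0,T]. Then the variance with respect to zero, Var(δ) = (1/T)∫₀ᵀ δ(t)² dt, satisfies Var(δ) ≤ ⌈T/Γ⌉·γ/T. -/
open MeasureTheory Set

noncomputable section

/-- The continuous-time uncertainty set `D` of measurable frequency-deviation
scenarios `δ : [0,T] → [-1,1]` whose total absolute deviation over every
backward window of length `Γ` is at most `γ`. -/
def Dset (T Γ γ : ℝ) : Set (ℝ → ℝ) :=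
  {δ | Measurable δ ∧ (∀ t ∈ Icc (0:ℝ) T, δ t ∈ Icc (-1:ℝ) 1) ∧
    ∀ t ∈ Icc (0:ℝ) T, (∫ s in (max (t - Γ) 0)..t, |δ s|) ≤ γ}

/-- The nonnegative part `D⁺` of the continuous uncertainty set. -/
def DsetPlus (T Γ γ : ℝ) : Set (ℝ → ℝ) :=
  Dset T Γ γ ∩ {δ | ∀ t ∈ Icc (0:ℝ) T, δ t ∈ Icc (0:ℝ) 1}

/-- The discrete uncertainty set `D_K` (with `0`-based indexing): vectors in
`[-1,1]^K` whose sum of absolute values over each backward window of `W = Γ/Δt`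
periods is at most `g = γ/Δt`. -/
def DK (K W g : ℕ) : Set (Fin K → ℝ) :=
  {δ | (∀ l, |δ l| ≤ 1) ∧ ∀ k : Fin K,
    (∑ l ∈ Finset.univ.filter
      (fun l : Fin K => (k : ℕ) + 1 - W ≤ (l : ℕ) ∧ (l : ℕ) ≤ (k : ℕ)), |δ l|) ≤ (g : ℝ)}

/-- The nonnegative part `D_K⁺` of the discrete uncertainty set. -/
def DKplus (K W g : ℕ) : Set (Fin K → ℝ) :=
  DK K W g ∩ {δ | ∀ l, 0 ≤ δ l}

/-- The lifting operator `L` mapping a vector to the piecewise constant function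
with value `v k` on `[kΔt, (k+1)Δt)` (0-based), and `v (K-1)` at `t = KΔt`. -/
def lift (Δt : ℝ) {K : ℕ} (v : Fin K → ℝ) : ℝ → ℝ := fun t =>
  if h : min (⌊t / Δt⌋.toNat) (K - 1) < K then v ⟨min (⌊t / Δt⌋.toNat) (K - 1), h⟩ else 0

/-- The averaging operator `L†` mapping a function to its vector of averages
over the trading intervals. -/
def avg (Δt : ℝ) (K : ℕ) (w : ℝ → ℝ) : Fin K → ℝ := fun k =>
  (1 / Δt) * ∫ s in (((k : ℕ) : ℝ) * Δt)..((((k : ℕ) : ℝ) + 1) * Δt), w s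

/-- The integrand of the continuous-time state-of-charge. -/
def socIntegrand (ηp ηm : ℝ) (xb xr δ d : ℝ → ℝ) (s : ℝ) : ℝ :=
  ηp * max (xb s + δ s * xr s) 0 - (1 / ηm) * max (-(xb s + δ s * xr s)) 0 - d s

/-- The continuous-time state-of-charge `y(x^b, x^r, δ, y₀, t)`. -/
def soc (ηp ηm : ℝ) (xb xr δ d : ℝ → ℝ) (y0 t : ℝ) : ℝ :=
  y0 + ∫ s in (0:ℝ)..t, socIntegrand ηp ηm xb xr δ d s

/-- The discrete-time state-of-charge `y_k(𝐱^b, 𝐱^r, 𝛅, y₀)` (0-based indexing: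
the sum extends over the first `k` components). -/
def ysoc (Δt ηp ηm : ℝ) {K : ℕ} (xb xr δ d : Fin K → ℝ) (y0 : ℝ) (k : ℕ) : ℝ :=
  y0 + Δt * ∑ l ∈ Finset.univ.filter (fun l : Fin K => (l : ℕ) < k),
    (ηp * max (xb l + δ l * xr l) 0 - (1 / ηm) * max (-(xb l + δ l * xr l)) 0 - d l)

/-- Proposition 2: every scenario `δ ∈ D` with square-integrable
values satisfies `Var(δ) = (1/T)∫₀ᵀ δ(t)² dt ≤ ⌈T/Γ⌉·γ/T`. -/
theorem stmt_1 (T Γ γ : ℝ) (hT : 0 < T) (hγ : 0 < γ) (hγΓ : γ ≤ Γ) (hΓT : Γ ≤ T)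
    (δ : ℝ → ℝ) (hδ : δ ∈ Dset T Γ γ)
    (hsq : IntervalIntegrable (fun t => (δ t) ^ 2) volume 0 T) :
    (1 / T) * ∫ t in (0:ℝ)..T, (δ t) ^ 2 ≤ ((⌈T / Γ⌉ : ℤ) : ℝ) * γ / T := by
  obtain ⟨hmeas, hbdd, hwin⟩ := hδ
  have hΓ : 0 < Γ := lt_of_lt_of_le hγ hγΓ
  have hT0 : (0:ℝ) ≤ T := hT.le
  -- |δ| is interval integrable on [0,T]
  have habs : IntervalIntegrable (fun t => |δ t|) volume 0 T := by
    have hone : IntervalIntegrable (fun _ : ℝ => (1:ℝ)) volume 0 T :=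
      intervalIntegrable_const
    refine hone.mono_fun (hmeas.abs.aestronglyMeasurable) ?_
    refine (ae_restrict_iff' measurableSet_uIoc).2 (Filter.Eventually.of_forall ?_)
    intro t ht
    have ht' : t ∈ Icc (0:ℝ) T := by
      rw [uIoc_of_le hT0] at ht
      exact ⟨ht.1.le, ht.2⟩
    have := hbdd t ht'
    simp only [Real.norm_eq_abs, abs_abs, norm_one]
    exact abs_le.2 ⟨this.1, this.2⟩
  have habs' : ∀ a b : ℝ, 0 ≤ a → a ≤ b → b ≤ T → IntervalIntegrable (fun t => |δ t|) volume a b := by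
    intro a b ha hab hb
    refine habs.mono_set ?_
    rw [uIcc_of_le hab, uIcc_of_le hT0]
    exact Icc_subset_Icc ha hb
  -- key: any subwindow of length ≤ Γ contributes ≤ γ
  have key : ∀ a b : ℝ, 0 ≤ a → a ≤ b → b ≤ T → b - a ≤ Γ →
      (∫ s in a..b, |δ s|) ≤ γ := by
    intro a b ha hab hbT hlen
    have hmb : max (b - Γ) 0 ≤ a := max_le (by linarith) ha
    have h1 : (∫ s in a..b, |δ s|) ≤ ∫ s in (max (b - Γ) 0)..b, |δ s| := by
      refine intervalIntegral.integral_mono_interval hmb hab le_rfl ?_ ?_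
      · exact (ae_restrict_iff' measurableSet_Ioc).2
          (Filter.Eventually.of_forall (fun t _ => abs_nonneg _))
      · exact habs' _ _ (le_max_right _ _) (le_trans hmb hab) hbT
    exact h1.trans (hwin b ⟨le_trans ha hab, hbT⟩)
  -- induction: ∫₀^{min(nΓ,T)} |δ| ≤ n γ
  have ind : ∀ n : ℕ, (∫ s in (0:ℝ)..(min (n * Γ) T), |δ s|) ≤ n * γ := by
    intro n
    induction n with
    | zero => simp [hT0]
    | succ n ih =>
      set a := min ((n:ℝ) * Γ) T with ha
      set b := min (((n:ℝ)+1) * Γ) T with hb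
      have ha0 : 0 ≤ a := le_min (by positivity) hT0
      have hab : a ≤ b := min_le_min (by nlinarith [hΓ.le]) le_rfl
      have hbT : b ≤ T := min_le_right _ _
      have hlen : b - a ≤ Γ := by
        rcases le_total ((n:ℝ) * Γ) T with h | h
        · have ha' : a = (n:ℝ) * Γ := min_eq_left h
          have hb' : b ≤ ((n:ℝ)+1) * Γ := min_le_left _ _
          rw [ha']; nlinarith
        · have ha' : a = T := min_eq_right h
          rw [ha']; linarith
      have hsplit : (∫ s in (0:ℝ)..b, |δ s|) =
          (∫ s in (0:ℝ)..a, |δ s|) + ∫ s in a..b, |δ s| :=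
        (intervalIntegral.integral_add_adjacent_intervals
          (habs' 0 a le_rfl ha0 (le_trans hab hbT)) (habs' a b ha0 hab hbT)).symm
      have main : (∫ s in (0:ℝ)..b, |δ s|) ≤ n * γ + γ := by
        rw [hsplit]
        exact add_le_add ih (key a b ha0 hab hbT hlen)
      push_cast
      rw [← hb]
      linarith
  -- apply with n = ⌈T/Γ⌉
  have hceil1 : (1:ℤ) ≤ ⌈T / Γ⌉ := Int.ceil_pos.mpr (div_pos hT hΓ)
  set n : ℕ := (⌈T / Γ⌉).toNat with hn
  have htn : ((⌈T / Γ⌉).toNat : ℤ) = ⌈T / Γ⌉ := Int.toNat_of_nonneg (by linarith)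
  have hcast : ((n:ℝ)) = ((⌈T / Γ⌉ : ℤ) : ℝ) := by
    rw [hn]; exact_mod_cast congrArg (Int.cast : ℤ → ℝ) htn
  have hTn : T ≤ n * Γ := by
    have h1 : T / Γ ≤ ((⌈T / Γ⌉ : ℤ) : ℝ) := Int.le_ceil _
    rw [div_le_iff₀ hΓ] at h1
    rw [hcast]; linarith
  have hmin : min ((n:ℝ) * Γ) T = T := min_eq_right hTn
  have hineq : (∫ s in (0:ℝ)..T, |δ s|) ≤ n * γ := by
    have := ind n; rwa [hmin] at this
  -- δ² ≤ |δ| on [0,T]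
  have hsqle : (∫ t in (0:ℝ)..T, (δ t) ^ 2) ≤ ∫ t in (0:ℝ)..T, |δ t| := by
    refine intervalIntegral.integral_mono_on hT0 hsq habs ?_
    intro t ht
    have h1 : |δ t| ≤ 1 := abs_le.2 ⟨(hbdd t ht).1, (hbdd t ht).2⟩
    calc (δ t) ^ 2 = |δ t| * |δ t| := by rw [← abs_mul, abs_of_nonneg (mul_self_nonneg _), sq]
      _ ≤ |δ t| * 1 := mul_le_mul_of_nonneg_left h1 (abs_nonneg _)
      _ = |δ t| := mul_one _
  have hfinal : (∫ t in (0:ℝ)..T, (δ t) ^ 2) ≤ ((⌈T / Γ⌉ : ℤ) : ℝ) * γ := by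
    calc (∫ t in (0:ℝ)..T, (δ t) ^ 2) ≤ ∫ t in (0:ℝ)..T, |δ t| := hsqle
      _ ≤ n * γ := hineq
      _ = ((⌈T / Γ⌉ : ℤ) : ℝ) * γ := by rw [hcast]
  have heq : ((⌈T / Γ⌉ : ℤ) : ℝ) * γ / T = (1 / T) * (((⌈T / Γ⌉ : ℤ) : ℝ) * γ) := by ring
  rw [heq]
  exact mul_le_mul_of_nonneg_left hfinal (by positivity)
end
end

section
/- Let T > 0 and 0 < γ ≤ Γ ≤ T. Every δ ∈ D satisfies the total budget bound ∫₀ᵀ |δ(t)| dt ≤ ⌈T/Γ⌉·γ. -/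
open MeasureTheory Set

noncomputable section

/-- every scenario `δ ∈ D` satisfies the total budget bound
`∫₀ᵀ |δ(t)| dt ≤ ⌈T/Γ⌉·γ`. -/
theorem stmt_2 (T Γ γ : ℝ) (hT : 0 < T) (hγ : 0 < γ) (hγΓ : γ ≤ Γ) (hΓT : Γ ≤ T)
    (δ : ℝ → ℝ) (hδ : δ ∈ Dset T Γ γ) :
    (∫ t in (0:ℝ)..T, |δ t|) ≤ ((⌈T / Γ⌉ : ℤ) : ℝ) * γ := by
  obtain ⟨hmeas, hbd, hwin⟩ := hδ
  have hΓ : (0:ℝ) < Γ := lt_of_lt_of_le hγ hγΓ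
  -- integrability of |δ| on [0,T]
  have hI : IntervalIntegrable (fun s => |δ s|) MeasureTheory.volume 0 T := by
    apply (intervalIntegrable_const (c := (1:ℝ))).mono_fun
      (hmeas.abs.aestronglyMeasurable)
    rw [Filter.EventuallyLE, MeasureTheory.ae_restrict_iff' measurableSet_uIoc]
    refine MeasureTheory.ae_of_all _ (fun s hs => ?_)
    have hs' : s ∈ Icc (0:ℝ) T := by
      rw [uIoc_of_le hT.le] at hs
      exact ⟨hs.1.le, hs.2⟩
    have := hbd s hs'
    simp only [Real.norm_eq_abs, abs_abs, abs_one]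
    exact abs_le.mpr this
  have hsub : ∀ a b : ℝ, 0 ≤ a → a ≤ b → b ≤ T →
      IntervalIntegrable (fun s => |δ s|) MeasureTheory.volume a b := by
    intro a b ha hab hb
    refine hI.mono_set ?_
    rw [uIcc_of_le hT.le, uIcc_of_le hab]
    intro x hx
    exact ⟨le_trans ha hx.1, le_trans hx.2 hb⟩
  -- key induction
  have key : ∀ i : ℕ, (∫ t in (0:ℝ)..(min (i * Γ) T), |δ t|) ≤ i * γ := by
    intro i
    induction i with
    | zero => simp [min_eq_left hT.le]
    | succ i ih =>
      set a := min ((i:ℝ) * Γ) T with ha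
      set b := min (((i:ℕ)+1 : ℕ) * Γ : ℝ) T with hb
      have h0a : 0 ≤ a := le_min (by positivity) hT.le
      have hab : a ≤ b := by
        apply min_le_min _ le_rfl
        push_cast
        nlinarith
      have hbT : b ≤ T := min_le_right _ _
      have hsplit : (∫ t in (0:ℝ)..b, |δ t|)
          = (∫ t in (0:ℝ)..a, |δ t|) + ∫ t in a..b, |δ t| := by
        rw [intervalIntegral.integral_add_adjacent_intervals
          (hsub 0 a le_rfl h0a (le_trans hab hbT)) (hsub a b h0a hab hbT)]
      have hbmem : b ∈ Icc (0:ℝ) T := ⟨le_min (by positivity) hT.le, hbT⟩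
      have hmono : (∫ t in a..b, |δ t|) ≤ ∫ t in (max (b - Γ) 0)..b, |δ t| := by
        apply intervalIntegral.integral_mono_interval _ hab le_rfl
        · exact MeasureTheory.ae_of_all _ (fun s => abs_nonneg _)
        · exact hsub _ _ (le_max_right _ _) (max_le (by linarith [hbmem.1]) hbmem.1) hbT
        · apply max_le _ h0a
          apply le_min _ (by linarith)
          have : b ≤ ((i:ℕ)+1 : ℕ) * Γ := min_le_left _ _
          push_cast at this ⊢
          linarith
      have := hwin b hbmem
      push_cast
      push_cast at ih
      linarith
  -- conclude
  have hceil : (0:ℤ) < ⌈T / Γ⌉ := by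
    apply Int.ceil_pos.mpr
    positivity
  set n : ℕ := (⌈T / Γ⌉).toNat with hn
  have hcast : ((n : ℤ) : ℝ) = ((⌈T / Γ⌉ : ℤ) : ℝ) := by
    rw [hn, Int.toNat_of_nonneg hceil.le]
  have hTn : T ≤ (n : ℝ) * Γ := by
    have h1 : T / Γ ≤ ((⌈T / Γ⌉ : ℤ) : ℝ) := Int.le_ceil _
    have h2 : ((n:ℤ):ℝ) = ((⌈T / Γ⌉ : ℤ) : ℝ) := hcast
    have : T / Γ * Γ ≤ ((n:ℝ)) * Γ := by
      apply mul_le_mul_of_nonneg_right _ hΓ.le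
      push_cast at h2 ⊢
      linarith
    rwa [div_mul_cancel₀ _ hΓ.ne'] at this
  have := key n
  rw [min_eq_right hTn] at this
  have : (∫ t in (0:ℝ)..T, |δ t|) ≤ (n:ℝ) * γ := this
  have heq : ((n:ℝ)) = ((⌈T / Γ⌉ : ℤ) : ℝ) := by push_cast at hcast ⊢; linarith [hcast]
  linarith [this, mul_le_mul_of_nonneg_right (le_of_eq heq) hγ.le]
end
end

section
/- Let T > 0, 0 < γ ≤ Γ ≤ T, and let Δt > 0 be such that K = T/Δt is a positive integer and γ/Δt and Γ/Δt are positive integers. Then the lift of every discrete scenario lies in the continuous uncertainty set: for every δ ∈ D_K, the piecewise constant function Lδ belongs to D (i.e. L(D_K) ⊆ D). -/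
open MeasureTheory Set

noncomputable section

lemma lift_measurable {Δt : ℝ} {K : ℕ} (v : Fin K → ℝ) : Measurable (lift Δt v) := by
  have h : lift Δt v = (fun n : ℤ => if h : min n.toNat (K-1) < K then v ⟨min n.toNat (K-1), h⟩ else 0) ∘ (fun t => ⌊t/Δt⌋) := rfl
  rw [h]
  exact (measurable_from_top).comp ((measurable_id.div_const Δt).floor)

lemma lift_eq_of_mem {Δt : ℝ} (hΔt : 0 < Δt) {K : ℕ} (v : Fin K → ℝ) {m : ℕ} (hm : m < K)
    {s : ℝ} (hs : (m:ℝ)*Δt ≤ s) (hs' : s < ((m:ℝ)+1)*Δt) :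
    lift Δt v s = v ⟨m, hm⟩ := by
  have h1 : ⌊s/Δt⌋ = (m : ℤ) := by
    rw [Int.floor_eq_iff]
    constructor
    · rw [le_div_iff₀ hΔt]; exact_mod_cast hs
    · rw [div_lt_iff₀ hΔt]; push_cast; linarith
  have h2 : min (⌊s/Δt⌋.toNat) (K-1) = m := by
    rw [h1]; simp; omega
  simp only [lift, h2, dif_pos hm]

lemma abs_lift_le {Δt : ℝ} {K : ℕ} (v : Fin K → ℝ) (hv : ∀ l, |v l| ≤ 1) (s : ℝ) :
    |lift Δt v s| ≤ 1 := by
  unfold lift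
  split
  · exact hv _
  · simp

lemma intervalIntegrable_abs_lift {Δt : ℝ} {K : ℕ} (v : Fin K → ℝ) (hv : ∀ l, |v l| ≤ 1)
    (a b : ℝ) : IntervalIntegrable (fun s => |lift Δt v s|) volume a b := by
  apply IntervalIntegrable.mono_fun' (g := fun _ => (1:ℝ)) intervalIntegrable_const
    ((lift_measurable v).abs.aestronglyMeasurable)
  filter_upwards with s
  rw [Real.norm_eq_abs, abs_abs]
  exact abs_lift_le v hv s

lemma integral_lift_piece {Δt : ℝ} (hΔt : 0 < Δt) {K : ℕ} (v : Fin K → ℝ) {m : ℕ} (hm : m < K)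
    {a b : ℝ} (ha : (m:ℝ)*Δt ≤ a) (hab : a ≤ b) (hb : b ≤ ((m:ℝ)+1)*Δt) :
    (∫ s in a..b, |lift Δt v s|) = (b - a) * |v ⟨m, hm⟩| := by
  have hnull : ∀ᵐ s : ℝ, s ≠ ((m:ℝ)+1)*Δt := by
    rw [ae_iff]
    simpa using Real.volume_singleton (a := ((m:ℝ)+1)*Δt)
  have hcongr : ∀ᵐ s : ℝ, s ∈ Set.uIoc a b → |lift Δt v s| = |v ⟨m, hm⟩| := by
    filter_upwards [hnull] with s hne hs
    rw [Set.uIoc_of_le hab] at hs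
    rw [lift_eq_of_mem hΔt v hm (le_trans ha hs.1.le) (lt_of_le_of_ne (le_trans hs.2 hb) hne)]
  rw [intervalIntegral.integral_congr_ae hcongr, intervalIntegral.integral_const, smul_eq_mul]

/-- `c` extends `|v|` by zero. -/
def cfun {K : ℕ} (v : Fin K → ℝ) (l : ℕ) : ℝ := if h : l < K then |v ⟨l, h⟩| else 0

lemma cfun_nonneg {K : ℕ} (v : Fin K → ℝ) (l : ℕ) : 0 ≤ cfun v l := by
  unfold cfun; split <;> positivity

lemma Fval {Δt : ℝ} (hΔt : 0 < Δt) {K : ℕ} (v : Fin K → ℝ) (hv : ∀ l, |v l| ≤ 1) :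
    ∀ m : ℕ, m < K → ∀ s : ℝ, (m:ℝ)*Δt ≤ s → s ≤ ((m:ℝ)+1)*Δt →
    (∫ u in (0:ℝ)..s, |lift Δt v u|)
      = Δt * (∑ l ∈ Finset.range m, cfun v l) + (s - (m:ℝ)*Δt) * cfun v m := by
  intro m
  induction m with
  | zero =>
    intro hm s h1 h2
    rw [integral_lift_piece hΔt v hm (by simp) (by simpa using h1) h2]
    simp [cfun, hm]
  | succ n ih =>
    intro hm s h1 h2
    have hn : n < K := Nat.lt_of_succ_lt hm
    have hstep : ((n:ℝ))*Δt ≤ ((n:ℝ)+1)*Δt := by nlinarith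
    have key : (∫ u in (0:ℝ)..(((n:ℝ)+1)*Δt), |lift Δt v u|)
        + (∫ u in (((n:ℝ)+1)*Δt)..s, |lift Δt v u|)
        = ∫ u in (0:ℝ)..s, |lift Δt v u| :=
      intervalIntegral.integral_add_adjacent_intervals
        (intervalIntegrable_abs_lift v hv _ _) (intervalIntegrable_abs_lift v hv _ _)
    rw [← key, ih hn (((n:ℝ)+1)*Δt) hstep (le_refl _),
      integral_lift_piece hΔt v hm (by push_cast; linarith) (by push_cast at h1 ⊢; linarith)
        (by push_cast at h2 ⊢; linarith)]
    rw [Finset.sum_range_succ]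
    rw [show |v ⟨n+1, hm⟩| = cfun v (n+1) from by simp [cfun, hm],
      show cfun v n = |v ⟨n, hn⟩| from by simp [cfun, hn]]
    push_cast
    ring

lemma sum_window {K W : ℕ} (v : Fin K → ℝ) (k : ℕ) :
    (∑ l ∈ Finset.univ.filter (fun l : Fin K => k + 1 - W ≤ (l:ℕ) ∧ (l:ℕ) ≤ k), |v l|)
      = ∑ l ∈ Finset.Ico (k+1-W) (min (k+1) K), cfun v l := by
  have h : ∀ l : Fin K, (if (k+1-W ≤ (l:ℕ) ∧ (l:ℕ) ≤ k) then |v l| else 0)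
      = (fun n : ℕ => if (k+1-W ≤ n ∧ n ≤ k) then cfun v n else 0) (l:ℕ) := by
    intro l; simp [cfun, l.isLt]
  rw [Finset.sum_filter, Finset.sum_congr rfl (fun l _ => h l),
    Fin.sum_univ_eq_sum_range (fun n : ℕ => if (k+1-W ≤ n ∧ n ≤ k) then cfun v n else 0),
    ← Finset.sum_filter]
  apply Finset.sum_congr _ (fun _ _ => rfl)
  ext l
  simp only [Finset.mem_filter, Finset.mem_Ico, Finset.mem_range, Finset.mem_Ico, lt_min_iff]
  omega

/-- part of Proposition 3: the lift of every discrete scenario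
lies in the continuous uncertainty set, i.e. `L(D_K) ⊆ D`. -/
theorem stmt_3 (Δt : ℝ) (K W g : ℕ) (hΔt : 0 < Δt)
    (hg : 0 < g) (hgW : g ≤ W) (hWK : W ≤ K)
    (T Γ γ : ℝ) (hT : T = K * Δt) (hΓ : Γ = W * Δt) (hγ : γ = g * Δt)
    (δ : Fin K → ℝ) (hδ : δ ∈ DK K W g) :
    lift Δt δ ∈ Dset T Γ γ := by
  obtain ⟨hδ1, hδ2⟩ := hδ
  have hW1 : 1 ≤ W := le_trans hg hgW
  have hK1 : 1 ≤ K := le_trans hW1 hWK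
  -- window sum bounds, in ℕ-indexed form
  have hwin : ∀ k : ℕ, k < K → (∑ l ∈ Finset.Ico (k+1-W) (min (k+1) K), cfun δ l) ≤ (g:ℝ) := by
    intro k hk
    have := hδ2 ⟨k, hk⟩
    rwa [sum_window] at this
  refine ⟨lift_measurable δ, ?_, ?_⟩
  · intro t _
    exact abs_le.mp (abs_lift_le δ hδ1 t)
  intro t ht
  obtain ⟨ht0, htT⟩ := ht
  -- the index of t
  set n : ℕ := ⌊t/Δt⌋.toNat with hn
  set m : ℕ := min n (K-1) with hmdef
  have hmK : m < K := by omega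
  have hfl : (0:ℤ) ≤ ⌊t/Δt⌋ := Int.floor_nonneg.mpr (by positivity)
  have hncast : ((n:ℝ)) ≤ t/Δt := by
    have h := Int.floor_le (t/Δt)
    have h2 : ((n:ℤ):ℝ) ≤ t/Δt := by rw [hn, Int.toNat_of_nonneg hfl]; exact h
    exact_mod_cast h2
  have hm1 : (m:ℝ) * Δt ≤ t := by
    have : (m:ℝ) ≤ (n:ℝ) := by exact_mod_cast Nat.min_le_left n (K-1)
    rw [← le_div_iff₀ hΔt]; linarith
  have hm2 : t ≤ ((m:ℝ)+1) * Δt := by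
    rcases Nat.lt_or_ge n K with hnK | hnK
    · have hmn : m = n := by omega
      have : t/Δt < (n:ℝ) + 1 := by
        have h := Int.lt_floor_add_one (t/Δt)
        have h2 : t/Δt < ((n:ℤ):ℝ) + 1 := by rw [hn, Int.toNat_of_nonneg hfl]; exact_mod_cast h
        exact_mod_cast h2
      rw [← div_le_iff₀ hΔt, hmn]; linarith
    · have hmK1 : m = K - 1 := by omega
      have : ((m:ℝ)+1) = (K:ℝ) := by rw [hmK1]; push_cast [Nat.cast_sub hK1]; ring
      rw [this]; rw [hT] at htT; exact htT
  clear hncast hfl hn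
  clear_value n m
  clear hmdef n
  have hFt := Fval hΔt δ hδ1 m hmK t hm1 hm2
  by_cases hcase : t - Γ ≤ 0
  · -- the window starts at 0
    rw [max_eq_right hcase, hFt]
    -- m ≤ W
    have hmW : m ≤ W := by
      by_contra hmW
      push_neg at hmW
      have : ((W:ℝ)+1) ≤ (m:ℝ) := by exact_mod_cast hmW
      have : ((W:ℝ)) * Δt < (m:ℝ) * Δt := by nlinarith
      rw [hΓ] at hcase; linarith
    rcases Nat.lt_or_ge m W with hmW' | hmW'
    · -- use window ending at m
      have hb := hwin m hmK
      have h0 : m + 1 - W = 0 := by omega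
      rw [h0] at hb
      have hrange : Finset.Ico 0 (min (m+1) K) = Finset.range (min (m+1) K) := by
        ext l; simp
      rw [hrange, min_eq_left (by omega)] at hb
      rw [Finset.sum_range_succ] at hb
      have hc : 0 ≤ cfun δ m := cfun_nonneg δ m
      have h2 : (t - (m:ℝ)*Δt) * cfun δ m ≤ Δt * cfun δ m := by nlinarith
      have h3 : 0 ≤ ∑ l ∈ Finset.range m, cfun δ l :=
        Finset.sum_nonneg fun l _ => cfun_nonneg δ l
      rw [hγ]; nlinarith
    · -- m = W, t = m Δt
      have hmW2 : m = W := le_antisymm hmW hmW'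
      have hteq : t = (m:ℝ) * Δt := by
        rw [hΓ, ← hmW2] at hcase; linarith
      rw [hteq, sub_self, zero_mul, add_zero]
      have hm1K : m - 1 < K := by omega
      have hb := hwin (m-1) hm1K
      have he : (m-1) + 1 - W = 0 := by omega
      have he2 : min ((m-1)+1) K = m := by omega
      rw [he, he2] at hb
      have hrange : Finset.Ico 0 m = Finset.range m := by ext l; simp
      rw [hrange] at hb
      rw [hγ]; nlinarith
  · -- window is [t - Γ, t]
    push_neg at hcase
    have hmax : max (t - Γ) 0 = t - Γ := max_eq_left (by linarith)
    rw [hmax]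
    -- m ≥ W
    have hWm : W ≤ m := by
      by_contra hWm
      push_neg at hWm
      have h1 : (m:ℝ) + 1 ≤ (W:ℝ) := by exact_mod_cast hWm
      have : ((m:ℝ)+1) * Δt ≤ (W:ℝ) * Δt := by nlinarith
      rw [hΓ] at hcase; linarith
    set j : ℕ := m - W with hj
    have hjK : j < K := by omega
    have hjcast : (j:ℝ) = (m:ℝ) - (W:ℝ) := by rw [hj]; push_cast [Nat.cast_sub hWm]; ring
    have hFa := Fval hΔt δ hδ1 j hjK (t - Γ) (by rw [hjcast, hΓ]; linarith)
      (by rw [hjcast, hΓ]; linarith)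
    rw [← intervalIntegral.integral_interval_sub_left
      (intervalIntegrable_abs_lift δ hδ1 0 t) (intervalIntegrable_abs_lift δ hδ1 0 (t - Γ)),
      hFt, hFa]
    -- sum bounds
    have hS1 := hwin m hmK
    have hS2 := hwin (m-1) (by omega)
    have he1 : m + 1 - W = j + 1 := by omega
    have he2 : (m-1) + 1 - W = j := by omega
    have he3 : min ((m-1)+1) K = m := by omega
    rw [he1] at hS1
    rw [he2, he3] at hS2
    -- decompose the sums
    have hd1 : ∑ l ∈ Finset.range m, cfun δ l - ∑ l ∈ Finset.range j, cfun δ l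
        = ∑ l ∈ Finset.Ico j m, cfun δ l := (Finset.sum_Ico_eq_sub _ (by omega)).symm
    have hd2 : ∑ l ∈ Finset.Ico j (m+1), cfun δ l
        = ∑ l ∈ Finset.Ico j m, cfun δ l + cfun δ m :=
      Finset.sum_Ico_succ_top (by omega) _
    have hd3 : ∑ l ∈ Finset.Ico j (m+1), cfun δ l
        = cfun δ j + ∑ l ∈ Finset.Ico (j+1) (m+1), cfun δ l :=
      Finset.sum_eq_sum_Ico_succ_bot (by omega) _
    have hmin1 : min (m+1) K = m+1 ∨ min (m+1) K = m := by omega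
    -- r bounds
    set r : ℝ := t - (m:ℝ)*Δt with hr
    have hr0 : 0 ≤ r := by rw [hr]; linarith
    have hrΔ : r ≤ Δt := by rw [hr]; linarith
    have hΓr : t - Γ - (j:ℝ)*Δt = r := by rw [hjcast, hΓ, hr]; ring
    rw [hΓr]
    have hS2' : ∑ l ∈ Finset.Ico j m, cfun δ l ≤ (g:ℝ) := hS2
    rcases hmin1 with hmin | hmin
    · rw [hmin] at hS1
      have hS1' : ∑ l ∈ Finset.Ico j m, cfun δ l + cfun δ m - cfun δ j ≤ (g:ℝ) := by
        linarith
      rw [hγ]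
      set S : ℝ := ∑ l ∈ Finset.Ico j m, cfun δ l with hSdef
      have key : Δt * ∑ l ∈ Finset.range m, cfun δ l + r * cfun δ m -
          (Δt * ∑ l ∈ Finset.range j, cfun δ l + r * cfun δ j)
          = (Δt - r) * S + r * (S + cfun δ m - cfun δ j) := by
        linear_combination Δt * hd1
      have h1 : (Δt - r) * S ≤ (Δt - r) * (g:ℝ) :=
        mul_le_mul_of_nonneg_left hS2' (by linarith)
      have h2 : r * (S + cfun δ m - cfun δ j) ≤ r * (g:ℝ) :=
        mul_le_mul_of_nonneg_left hS1' hr0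
      have h3 : (Δt - r) * (g:ℝ) + r * (g:ℝ) = (g:ℝ) * Δt := by ring
      linarith
    · -- m = K - 1 and min (m+1) K = m: impossible since m+1 ≤ K
      omega
end
end

section
/- Let T > 0, 0 < γ ≤ Γ ≤ T, and let Δt > 0 be such that K = T/Δt is a positive integer and γ/Δt and Γ/Δt are positive integers. Then the image of the continuous uncertainty set under the averaging operator equals the discrete uncertainty set: L†(D) = D_K, i.e. (a) for every δ ∈ D the vector L†δ belongs to D_K, and (b) every vector in D_K equals L†δ for some δ ∈ D. -/
open MeasureTheory Set

noncomputable section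

/-!
(a) Averaging does not increase absolute values, and since `Γ` and `γ` are multiples of `Δt`,
a discrete window sum of `|L†δ|` ending at the grid index `m` is at most `1/Δt` times the
continuous window integral of `|δ|` ending at `t = mΔt`, hence at most `γ/Δt`.

(b) Conversely, `D_K` is hit by the piecewise constant lift `L v`, with `L†(L v) = v`. For
`t = (n + θ)Δt` both ends of the window `[max (t - Γ) 0, t]` move through grid cells of the same
length, on which the primitive of `|L v|` is affine; so the window integral at `t` is the convex
combination with weights `1 - θ`, `θ` of the window integrals at the grid times `nΔt` and
`(n + 1)Δt`, which are `Δt` times discrete window sums, hence at most `γ`.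
-/

lemma intervalIntegrable_of_abs_le {f : ℝ → ℝ} (hf : Measurable f) {a b C : ℝ}
    (hC : ∀ x ∈ uIoc a b, |f x| ≤ C) : IntervalIntegrable f volume a b :=
  (intervalIntegrable_const (c := C)).mono_fun' hf.aestronglyMeasurable.restrict
    ((ae_restrict_iff' measurableSet_uIoc).2 (.of_forall hC))

lemma mem_DK_iff {K W g : ℕ} {v : Fin K → ℝ} :
    v ∈ DK K W g ↔ (∀ l, |v l| ≤ 1) ∧ ∀ m ≤ K,
      ∑ l ∈ Finset.univ.filter (fun l : Fin K => m - W ≤ (l : ℕ) ∧ (l : ℕ) < m), |v l| ≤ g := by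
  refine and_congr_right fun _ => ⟨fun hv m hmK => ?_, fun hv k => ?_⟩
  · rcases Nat.eq_zero_or_pos m with rfl | hm
    · simp
    · convert hv ⟨m - 1, by omega⟩ using 2
      ext l
      simp only [Finset.mem_filter, Finset.mem_univ, true_and]
      omega
  · convert hv (k + 1) k.isLt using 2
    ext l
    simp only [Finset.mem_filter, Finset.mem_univ, true_and]
    omega

section

variable {Δt : ℝ} {K : ℕ}

lemma floor_div_toNat_eq (hΔt : 0 < Δt) {n : ℕ} {s : ℝ}
    (hs : s ∈ Ico ((n : ℝ) * Δt) (((n : ℝ) + 1) * Δt)) : ⌊s / Δt⌋.toNat = n := by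
  have : ⌊s / Δt⌋ = n := by
    rw [Int.floor_eq_iff, le_div_iff₀ hΔt, div_lt_iff₀ hΔt]
    exact_mod_cast hs
  simp [this]

lemma lift_apply_of_mem_Ico (hΔt : 0 < Δt) (u : Fin K → ℝ) {n : ℕ} (hn : n < K) {s : ℝ}
    (hs : s ∈ Ico ((n : ℝ) * Δt) (((n : ℝ) + 1) * Δt)) : lift Δt u s = u ⟨n, hn⟩ := by
  have : min n (K - 1) = n := by omega
  simp only [lift, floor_div_toNat_eq hΔt hs, this, dif_pos hn]

lemma measurable_lift (u : Fin K → ℝ) : Measurable (lift Δt u) :=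
  (Measurable.of_discrete (f := fun m : ℕ =>
      if h : min m (K - 1) < K then u ⟨min m (K - 1), h⟩ else 0)).comp
    ((Measurable.of_discrete (f := Int.toNat)).comp
      (Int.measurable_floor.comp (measurable_id.div_const Δt)))

lemma abs_lift_le_s4 {u : Fin K → ℝ} {C : ℝ} (hC : 0 ≤ C) (hu : ∀ l, |u l| ≤ C) (t : ℝ) :
    |lift Δt u t| ≤ C := by
  unfold lift
  split
  · exact hu _
  · simpa using hC

lemma abs_lift (u : Fin K → ℝ) (t : ℝ) : |lift Δt u t| = lift Δt (fun l => |u l|) t := by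
  unfold lift
  split <;> simp

lemma intervalIntegrable_lift (u : Fin K → ℝ) (a b : ℝ) :
    IntervalIntegrable (lift Δt u) volume a b :=
  intervalIntegrable_of_abs_le (measurable_lift u)
    fun x _ => abs_lift_le_s4 (norm_nonneg u) (fun l => norm_le_pi_norm u l) x

lemma integral_lift_cell (hΔt : 0 < Δt) (u : Fin K → ℝ) {n : ℕ} (hn : n < K) {θ : ℝ}
    (hθ : θ ∈ Icc (0 : ℝ) 1) :
    ∫ s in (n : ℝ) * Δt..((n : ℝ) + θ) * Δt, lift Δt u s = θ * Δt * u ⟨n, hn⟩ := by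
  have hle : (n : ℝ) * Δt ≤ ((n : ℝ) + θ) * Δt := by nlinarith [hθ.1]
  rw [intervalIntegral.integral_congr_Ioo_of_le hle (g := fun _ => u ⟨n, hn⟩)
    fun s hs => lift_apply_of_mem_Ico hΔt u hn ⟨hs.1.le, by nlinarith [hs.2, hθ.2]⟩]
  simp only [intervalIntegral.integral_const, smul_eq_mul]
  ring

lemma map_valEmbedding_filter_Ico {a b : ℕ} (hbK : b ≤ K) :
    (Finset.univ.filter fun l : Fin K => a ≤ (l : ℕ) ∧ (l : ℕ) < b).map Fin.valEmbedding
      = Finset.Ico a b := by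
  ext i
  simp only [Finset.mem_map, Finset.mem_filter, Finset.mem_univ, true_and,
    Fin.valEmbedding_apply, Finset.mem_Ico]
  exact ⟨fun ⟨l, hl, hli⟩ => hli ▸ hl, fun hi => ⟨⟨i, by omega⟩, hi, rfl⟩⟩

lemma sum_integral_cells (hΔt : 0 ≤ Δt) {f : ℝ → ℝ}
    (hf : IntervalIntegrable f volume 0 (K * Δt)) {a b : ℕ} (hab : a ≤ b) (hbK : b ≤ K) :
    ∑ l ∈ Finset.univ.filter (fun l : Fin K => a ≤ (l : ℕ) ∧ (l : ℕ) < b),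
        ∫ s in ((l : ℕ) : ℝ) * Δt..(((l : ℕ) : ℝ) + 1) * Δt, f s
      = ∫ s in (a : ℝ) * Δt..(b : ℝ) * Δt, f s := by
  have hmap := Finset.sum_map (Finset.univ.filter fun l : Fin K => a ≤ (l : ℕ) ∧ (l : ℕ) < b)
    Fin.valEmbedding (fun i : ℕ => ∫ s in (i : ℝ) * Δt..((i : ℝ) + 1) * Δt, f s)
  simp only [map_valEmbedding_filter_Ico hbK, Fin.valEmbedding_apply] at hmap
  rw [← hmap]
  have hcells := intervalIntegral.sum_integral_adjacent_intervals_Ico (f := f) (μ := volume)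
    (a := fun i : ℕ => (i : ℝ) * Δt) hab fun i hi => hf.mono_set <| by
      have hi := Set.mem_Ico.1 hi
      have h1 : ((i + 1 : ℕ) : ℝ) ≤ K := by exact_mod_cast (by omega : i + 1 ≤ K)
      have h0 : (i : ℝ) * Δt ≤ ((i + 1 : ℕ) : ℝ) * Δt := by gcongr; omega
      rw [uIcc_of_le h0, uIcc_of_le (by positivity : (0 : ℝ) ≤ K * Δt)]
      exact Icc_subset_Icc (by positivity) (by gcongr)
  push_cast at hcells
  exact hcells

lemma integral_lift_grid (hΔt : 0 < Δt) (u : Fin K → ℝ) {a b : ℕ} (hab : a ≤ b) (hbK : b ≤ K) :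
    ∫ s in (a : ℝ) * Δt..(b : ℝ) * Δt, lift Δt u s
      = Δt * ∑ l ∈ Finset.univ.filter (fun l : Fin K => a ≤ (l : ℕ) ∧ (l : ℕ) < b), u l := by
  rw [← sum_integral_cells hΔt.le (intervalIntegrable_lift u _ _) hab hbK, Finset.mul_sum]
  refine Finset.sum_congr rfl fun l _ => ?_
  rw [integral_lift_cell hΔt u l.isLt ⟨zero_le_one, le_rfl⟩]
  simp

lemma max_sub_mul_eq_natSub_mul (hΔt : 0 ≤ Δt) (m W : ℕ) :
    max ((m : ℝ) * Δt - W * Δt) 0 = ((m - W : ℕ) : ℝ) * Δt := by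
  rcases le_total W m with h | h
  · rw [Nat.cast_sub h, max_eq_left (by nlinarith [(Nat.cast_le (α := ℝ)).2 h])]
    ring
  · rw [Nat.sub_eq_zero_of_le h, max_eq_right (by nlinarith [(Nat.cast_le (α := ℝ)).2 h])]
    simp

lemma abs_avg_le_one (hΔt : 0 < Δt) {δ : ℝ → ℝ}
    (hδ : ∀ t ∈ Icc (0 : ℝ) (K * Δt), δ t ∈ Icc (-1 : ℝ) 1) (k : Fin K) :
    |avg Δt K δ k| ≤ 1 := by
  have hk : ((k : ℕ) : ℝ) + 1 ≤ K := by exact_mod_cast k.isLt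
  have hint := intervalIntegral.norm_integral_le_of_norm_le_const (C := 1)
    (a := ((k : ℕ) : ℝ) * Δt) (b := (((k : ℕ) : ℝ) + 1) * Δt) (f := δ) fun x hx => by
      rw [uIoc_of_le (by nlinarith)] at hx
      exact abs_le.2 (hδ x ⟨by nlinarith [hx.1], by nlinarith [hx.2]⟩)
  rw [Real.norm_eq_abs, show (((k : ℕ) : ℝ) + 1) * Δt - (k : ℕ) * Δt = Δt by ring,
    abs_of_pos hΔt] at hint
  rw [avg, abs_mul, abs_of_pos (one_div_pos.2 hΔt)]
  calc 1 / Δt * |∫ s in ((k : ℕ) : ℝ) * Δt..(((k : ℕ) : ℝ) + 1) * Δt, δ s|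
      ≤ 1 / Δt * (1 * Δt) := by gcongr
    _ = 1 := by field_simp

lemma sum_abs_avg_le (hΔt : 0 < Δt) {δ : ℝ → ℝ} (hδ : IntervalIntegrable δ volume 0 (K * Δt))
    {a b : ℕ} (hab : a ≤ b) (hbK : b ≤ K) :
    ∑ l ∈ Finset.univ.filter (fun l : Fin K => a ≤ (l : ℕ) ∧ (l : ℕ) < b), |avg Δt K δ l|
      ≤ 1 / Δt * ∫ s in (a : ℝ) * Δt..(b : ℝ) * Δt, |δ s| := by
  rw [← sum_integral_cells hΔt.le hδ.abs hab hbK, Finset.mul_sum]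
  refine Finset.sum_le_sum fun l _ => ?_
  rw [avg, abs_mul, abs_of_pos (by positivity)]
  gcongr
  exact intervalIntegral.abs_integral_le_integral_abs (by linarith)

lemma avg_mem_DK (hΔt : 0 < Δt) {W g : ℕ} {δ : ℝ → ℝ}
    (hδ : δ ∈ Dset (K * Δt) (W * Δt) (g * Δt)) : avg Δt K δ ∈ DK K W g := by
  obtain ⟨hmeas, hbound, hwindow⟩ := hδ
  have hint : IntervalIntegrable δ volume 0 (K * Δt) :=
    intervalIntegrable_of_abs_le hmeas fun x hx => by
      rw [uIoc_of_le (by positivity)] at hx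
      exact abs_le.2 (hbound x (Ioc_subset_Icc_self hx))
  refine mem_DK_iff.2 ⟨abs_avg_le_one hΔt hbound, fun m hmK => ?_⟩
  have hm : (m : ℝ) * Δt ∈ Icc (0 : ℝ) (K * Δt) := ⟨by positivity, by gcongr⟩
  have hw := hwindow _ hm
  rw [max_sub_mul_eq_natSub_mul hΔt.le] at hw
  calc _ ≤ 1 / Δt * ∫ s in ((m - W : ℕ) : ℝ) * Δt..(m : ℝ) * Δt, |δ s| :=
        sum_abs_avg_le hΔt hint (Nat.sub_le m W) hmK
    _ ≤ 1 / Δt * (g * Δt) := by gcongr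
    _ = g := by field_simp

lemma exists_eq_add_mul_of_mem_Icc (hΔt : 0 < Δt) (hK : 0 < K) {t : ℝ}
    (ht : t ∈ Icc (0 : ℝ) (K * Δt)) : ∃ n < K, ∃ θ ∈ Icc (0 : ℝ) 1, t = (n + θ) * Δt := by
  set x := t / Δt
  have hx0 : 0 ≤ x := div_nonneg ht.1 hΔt.le
  have hxK : x ≤ K := (div_le_iff₀ hΔt).2 ht.2
  refine ⟨min ⌊x⌋₊ (K - 1), by omega, x - min ⌊x⌋₊ (K - 1), ⟨?_, ?_⟩, ?_⟩
  · linarith [Nat.floor_le hx0, (Nat.cast_le (α := ℝ)).2 (min_le_left ⌊x⌋₊ (K - 1))]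
  · rcases le_total ⌊x⌋₊ (K - 1) with h | h
    · rw [min_eq_left h]
      linarith [Nat.lt_floor_add_one x]
    · rw [min_eq_right h, Nat.cast_pred hK]
      linarith
  · simp only [x, add_sub_cancel, div_mul_cancel₀ t hΔt.ne']

lemma integral_lift_interpolate (hΔt : 0 < Δt) (u : Fin K → ℝ) {n : ℕ} (hn : n < K) {θ : ℝ}
    (hθ : θ ∈ Icc (0 : ℝ) 1) :
    ∫ s in (0 : ℝ)..((n : ℝ) + θ) * Δt, lift Δt u s
      = (1 - θ) * (∫ s in (0 : ℝ)..(n : ℝ) * Δt, lift Δt u s)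
        + θ * ∫ s in (0 : ℝ)..((n + 1 : ℕ) : ℝ) * Δt, lift Δt u s := by
  have hsplit : ∀ θ' ∈ Icc (0 : ℝ) 1, ∫ s in (0 : ℝ)..((n : ℝ) + θ') * Δt, lift Δt u s
      = (∫ s in (0 : ℝ)..(n : ℝ) * Δt, lift Δt u s) + θ' * Δt * u ⟨n, hn⟩ := fun θ' hθ' => by
    rw [← integral_lift_cell hΔt u hn hθ',
      intervalIntegral.integral_add_adjacent_intervals (intervalIntegrable_lift u _ _)
        (intervalIntegrable_lift u _ _)]
  rw [Nat.cast_succ, hsplit θ hθ, hsplit 1 ⟨zero_le_one, le_rfl⟩]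
  ring

lemma integral_lift_window (hΔt : 0 < Δt) (u : Fin K → ℝ) {n : ℕ} (hn : n < K) {θ : ℝ}
    (hθ : θ ∈ Icc (0 : ℝ) 1) (W : ℕ) :
    ∫ s in max (((n : ℝ) + θ) * Δt - W * Δt) 0..((n : ℝ) + θ) * Δt, lift Δt u s
      = (1 - θ) * (∫ s in ((n - W : ℕ) : ℝ) * Δt..(n : ℝ) * Δt, lift Δt u s)
        + θ * ∫ s in ((n + 1 - W : ℕ) : ℝ) * Δt..((n + 1 : ℕ) : ℝ) * Δt, lift Δt u s := by
  have hP : ∀ a b, ∫ s in a..b, lift Δt u s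
      = (∫ s in (0 : ℝ)..b, lift Δt u s) - ∫ s in (0 : ℝ)..a, lift Δt u s := fun a b =>
    (intervalIntegral.integral_interval_sub_left (intervalIntegrable_lift u 0 b)
      (intervalIntegrable_lift u 0 a)).symm
  have hstart : ∫ s in (0 : ℝ)..max (((n : ℝ) + θ) * Δt - W * Δt) 0, lift Δt u s
      = (1 - θ) * (∫ s in (0 : ℝ)..((n - W : ℕ) : ℝ) * Δt, lift Δt u s)
        + θ * ∫ s in (0 : ℝ)..((n + 1 - W : ℕ) : ℝ) * Δt, lift Δt u s := by
    rcases le_or_gt W n with hWn | hnW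
    · have h : max (((n : ℝ) + θ) * Δt - W * Δt) 0 = (((n - W : ℕ) : ℝ) + θ) * Δt := by
        rw [Nat.cast_sub hWn, max_eq_left (by nlinarith [(Nat.cast_le (α := ℝ)).2 hWn, hθ.1])]
        ring
      rw [h, show n + 1 - W = n - W + 1 by omega]
      exact integral_lift_interpolate hΔt u (by omega) hθ
    · have h : max (((n : ℝ) + θ) * Δt - W * Δt) 0 = 0 := by
        have : (n : ℝ) + 1 ≤ W := by exact_mod_cast hnW
        exact max_eq_right (by nlinarith [hθ.2])
      simp [h, Nat.sub_eq_zero_of_le hnW.le, Nat.sub_eq_zero_of_le hnW]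
  rw [hP (max _ _), hP ((n - W : ℕ) * Δt), hP ((n + 1 - W : ℕ) * Δt), hstart,
    integral_lift_interpolate hΔt u hn hθ]
  ring

lemma integral_lift_grid_window_le (hΔt : 0 < Δt) {W g : ℕ} {v : Fin K → ℝ}
    (hv : v ∈ DK K W g) {m : ℕ} (hmK : m ≤ K) :
    ∫ s in ((m - W : ℕ) : ℝ) * Δt..(m : ℝ) * Δt, lift Δt (fun l => |v l|) s ≤ g * Δt := by
  rw [integral_lift_grid hΔt _ (Nat.sub_le m W) hmK, mul_comm]
  exact mul_le_mul_of_nonneg_right ((mem_DK_iff.1 hv).2 m hmK) hΔt.le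

lemma lift_mem_Dset (hΔt : 0 < Δt) {W g : ℕ} {v : Fin K → ℝ} (hv : v ∈ DK K W g) :
    lift Δt v ∈ Dset (K * Δt) (W * Δt) (g * Δt) := by
  refine ⟨measurable_lift v, fun t _ => abs_le.1 (abs_lift_le_s4 zero_le_one hv.1 t),
    fun t ht => ?_⟩
  rcases Nat.eq_zero_or_pos K with rfl | hK
  · obtain rfl : t = 0 := by simpa using ht
    rw [zero_sub, max_eq_right (neg_nonpos.2 (by positivity)), intervalIntegral.integral_same]
    positivity
  obtain ⟨n, hn, θ, hθ, rfl⟩ := exists_eq_add_mul_of_mem_Icc hΔt hK ht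
  simp only [abs_lift]
  rw [integral_lift_window hΔt _ hn hθ W]
  calc _ ≤ (1 - θ) * (g * Δt) + θ * (g * Δt) := by
        gcongr
        · linarith [hθ.2]
        · exact integral_lift_grid_window_le hΔt hv hn.le
        · exact hθ.1
        · exact integral_lift_grid_window_le hΔt hv hn
    _ = g * Δt := by ring

lemma avg_lift (hΔt : 0 < Δt) (v : Fin K → ℝ) : avg Δt K (lift Δt v) = v := by
  funext k
  rw [avg, integral_lift_cell hΔt v k.isLt ⟨zero_le_one, le_rfl⟩]
  field_simp

end

theorem stmt_4_general (Δt : ℝ) (K W g : ℕ) (hΔt : 0 < Δt)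
    (T Γ γ : ℝ) (hT : T = K * Δt) (hΓ : Γ = W * Δt) (hγ : γ = g * Δt) :
    (∀ δ ∈ Dset T Γ γ, avg Δt K δ ∈ DK K W g) ∧
    (∀ v ∈ DK K W g, ∃ δ ∈ Dset T Γ γ, avg Δt K δ = v) := by
  subst hT hΓ hγ
  exact ⟨fun δ hδ => avg_mem_DK hΔt hδ,
    fun v hv => ⟨lift Δt v, lift_mem_Dset hΔt hv, avg_lift hΔt v⟩⟩

/-- part of Proposition 3(i): the image of the continuous
uncertainty set under the averaging operator equals the discrete uncertainty
set, i.e. `L†(D) = D_K`. -/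
theorem stmt_4 (Δt : ℝ) (K W g : ℕ) (hΔt : 0 < Δt)
    (hg : 0 < g) (hgW : g ≤ W) (hWK : W ≤ K)
    (T Γ γ : ℝ) (hT : T = K * Δt) (hΓ : Γ = W * Δt) (hγ : γ = g * Δt) :
    (∀ δ ∈ Dset T Γ γ, avg Δt K δ ∈ DK K W g) ∧
    (∀ v ∈ DK K W g, ∃ δ ∈ Dset T Γ γ, avg Δt K δ = v) :=
  stmt_4_general Δt K W g hΔt T Γ γ hT hΓ hγ
end
end

section
/- Fix Δt > 0, efficiencies η⁺, η⁻ ∈ (0,1], a vector 𝐝 ∈ ℝ^K, and k ∈ {0,1,…,K}. Then: (i) for fixed 𝐱^r, 𝛅, y₀, the map 𝐱^b ↦ y_k(𝐱^b,𝐱^r,𝛅,y₀) is concave and nondecreasing with respect to the componentwise order on ℝ^K; (ii) for fixed 𝐱^b, 𝛅, y₀, the map 𝐱^r ↦ y_k(𝐱^b,𝐱^r,𝛅,y₀) is concave; (iii) for fixed 𝐱^b, y₀ and fixed 𝐱^r with nonnegative components, the map 𝛅 ↦ y_k(𝐱^b,𝐱^r,𝛅,y₀) is concave and nondecreasing with respect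 to the componentwise order; (iv) the map y₀ ↦ y_k(𝐱^b,𝐱^r,𝛅,y₀) is affine and nondecreasing. -/
open MeasureTheory Set

noncomputable section

lemma max_zero_eq (z : ℝ) : max z 0 = (z + |z|) / 2 := by
  rcases abs_cases z with ⟨h, h'⟩ | ⟨h, h'⟩ <;> rw [h] <;>
    [rw [max_eq_left h']; rw [max_eq_right h'.le]] <;> ring

lemma phi_concave (ηp ηm : ℝ) (hp : 0 < ηp) (hp1 : ηp ≤ 1) (hm : 0 < ηm) (hm1 : ηm ≤ 1)
    (a b θ : ℝ) (h0 : 0 ≤ θ) (h1 : θ ≤ 1) :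
    θ * (ηp * max a 0 - (1/ηm) * max (-a) 0) + (1-θ) * (ηp * max b 0 - (1/ηm) * max (-b) 0)
      ≤ ηp * max (θ*a+(1-θ)*b) 0 - (1/ηm) * max (-(θ*a+(1-θ)*b)) 0 := by
  have hinv : 1 ≤ 1/ηm := one_le_one_div hm hm1
  have htri : |θ*a+(1-θ)*b| ≤ θ*|a| + (1-θ)*|b| := by
    calc |θ*a+(1-θ)*b| ≤ |θ*a| + |(1-θ)*b| := abs_add_le _ _
    _ = θ*|a| + (1-θ)*|b| := by
        rw [abs_mul, abs_mul, abs_of_nonneg h0, abs_of_nonneg (show (0:ℝ) ≤ 1-θ by linarith)]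
  simp only [max_zero_eq, abs_neg]
  nlinarith [htri, mul_nonneg h0 (abs_nonneg a)]

lemma phi_mono (ηp ηm : ℝ) (hp : 0 < ηp) (hp1 : ηp ≤ 1) (hm : 0 < ηm) (hm1 : ηm ≤ 1)
    (a b : ℝ) (hab : a ≤ b) :
    ηp * max a 0 - (1/ηm) * max (-a) 0 ≤ ηp * max b 0 - (1/ηm) * max (-b) 0 := by
  have hinv : 1 ≤ 1/ηm := one_le_one_div hm hm1
  have h1 : |b| - |a| ≤ b - a := by
    have := abs_sub_abs_le_abs_sub b a
    rw [abs_of_nonneg (by linarith : (0:ℝ) ≤ b - a)] at this; linarith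
  simp only [max_zero_eq, abs_neg]
  nlinarith [h1, abs_nonneg a, abs_nonneg b]

lemma ysum_concave (Δt ηp ηm : ℝ) (hΔt : 0 ≤ Δt) (hp : 0 < ηp) (hp1 : ηp ≤ 1)
    (hm : 0 < ηm) (hm1 : ηm ≤ 1) {K : ℕ} (d : Fin K → ℝ) (k : ℕ)
    (A B C : Fin K → ℝ) (θ : ℝ) (h0 : 0 ≤ θ) (h1 : θ ≤ 1)
    (hC : ∀ l, C l = θ * A l + (1-θ) * B l) (y0 : ℝ) :
    θ * (y0 + Δt * ∑ l ∈ Finset.univ.filter (fun l : Fin K => (l:ℕ) < k),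
        (ηp * max (A l) 0 - (1/ηm) * max (-(A l)) 0 - d l))
      + (1-θ) * (y0 + Δt * ∑ l ∈ Finset.univ.filter (fun l : Fin K => (l:ℕ) < k),
        (ηp * max (B l) 0 - (1/ηm) * max (-(B l)) 0 - d l))
      ≤ y0 + Δt * ∑ l ∈ Finset.univ.filter (fun l : Fin K => (l:ℕ) < k),
        (ηp * max (C l) 0 - (1/ηm) * max (-(C l)) 0 - d l) := by
  have hS : θ * ∑ l ∈ Finset.univ.filter (fun l : Fin K => (l:ℕ) < k),
        (ηp * max (A l) 0 - (1/ηm) * max (-(A l)) 0 - d l)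
      + (1-θ) * ∑ l ∈ Finset.univ.filter (fun l : Fin K => (l:ℕ) < k),
        (ηp * max (B l) 0 - (1/ηm) * max (-(B l)) 0 - d l)
      ≤ ∑ l ∈ Finset.univ.filter (fun l : Fin K => (l:ℕ) < k),
        (ηp * max (C l) 0 - (1/ηm) * max (-(C l)) 0 - d l) := by
    rw [Finset.mul_sum, Finset.mul_sum, ← Finset.sum_add_distrib]
    refine Finset.sum_le_sum fun l _ => ?_
    have key := phi_concave ηp ηm hp hp1 hm hm1 (A l) (B l) θ h0 h1
    rw [← hC l] at key
    linarith
  have h2 := mul_le_mul_of_nonneg_left hS hΔt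
  nlinarith [h2]

lemma ysum_mono (Δt ηp ηm : ℝ) (hΔt : 0 ≤ Δt) (hp : 0 < ηp) (hp1 : ηp ≤ 1)
    (hm : 0 < ηm) (hm1 : ηm ≤ 1) {K : ℕ} (d : Fin K → ℝ) (k : ℕ)
    (A B : Fin K → ℝ) (hAB : ∀ l, A l ≤ B l) (y0 : ℝ) :
    y0 + Δt * ∑ l ∈ Finset.univ.filter (fun l : Fin K => (l:ℕ) < k),
        (ηp * max (A l) 0 - (1/ηm) * max (-(A l)) 0 - d l)
      ≤ y0 + Δt * ∑ l ∈ Finset.univ.filter (fun l : Fin K => (l:ℕ) < k),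
        (ηp * max (B l) 0 - (1/ηm) * max (-(B l)) 0 - d l) := by
  have hS := Finset.sum_le_sum (s := Finset.univ.filter (fun l : Fin K => (l:ℕ) < k))
    (fun l _ => by
      have := phi_mono ηp ηm hp hp1 hm hm1 (A l) (B l) (hAB l)
      linarith :
      ∀ l ∈ Finset.univ.filter (fun l : Fin K => (l:ℕ) < k),
        ηp * max (A l) 0 - (1/ηm) * max (-(A l)) 0 - d l
          ≤ ηp * max (B l) 0 - (1/ηm) * max (-(B l)) 0 - d l)
  nlinarith [mul_le_mul_of_nonneg_left hS hΔt]

/-- Proposition 4: structural properties of the discrete-time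
state-of-charge: (i) concave and nondecreasing in `𝐱^b`, (ii) concave in `𝐱^r`,
(iii) concave and nondecreasing in `𝛅` when `𝐱^r ≥ 0`, (iv) affine and
nondecreasing in `y₀`. -/
theorem stmt_6 (Δt ηp ηm : ℝ) (K : ℕ) (hK : 0 < K) (hΔt : 0 < Δt)
    (hηp : ηp ∈ Ioc (0:ℝ) 1) (hηm : ηm ∈ Ioc (0:ℝ) 1)
    (d : Fin K → ℝ) (k : ℕ) (hk : k ≤ K) :
    -- (i) concave and nondecreasing in 𝐱^b
    ((∀ xr δ : Fin K → ℝ, ∀ y0 : ℝ, ∀ u v : Fin K → ℝ, ∀ θ : ℝ, θ ∈ Icc (0:ℝ) 1 →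
        θ * ysoc Δt ηp ηm u xr δ d y0 k + (1 - θ) * ysoc Δt ηp ηm v xr δ d y0 k
          ≤ ysoc Δt ηp ηm (fun l => θ * u l + (1 - θ) * v l) xr δ d y0 k) ∧
      (∀ xr δ : Fin K → ℝ, ∀ y0 : ℝ, ∀ u v : Fin K → ℝ, (∀ l, u l ≤ v l) →
        ysoc Δt ηp ηm u xr δ d y0 k ≤ ysoc Δt ηp ηm v xr δ d y0 k)) ∧
    -- (ii) concave in 𝐱^r
    (∀ xb δ : Fin K → ℝ, ∀ y0 : ℝ, ∀ u v : Fin K → ℝ, ∀ θ : ℝ, θ ∈ Icc (0:ℝ) 1 →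
        θ * ysoc Δt ηp ηm xb u δ d y0 k + (1 - θ) * ysoc Δt ηp ηm xb v δ d y0 k
          ≤ ysoc Δt ηp ηm xb (fun l => θ * u l + (1 - θ) * v l) δ d y0 k) ∧
    -- (iii) concave and nondecreasing in 𝛅, provided 𝐱^r ≥ 0
    ((∀ xb xr : Fin K → ℝ, ∀ y0 : ℝ, (∀ l, 0 ≤ xr l) →
        ∀ u v : Fin K → ℝ, ∀ θ : ℝ, θ ∈ Icc (0:ℝ) 1 →
        θ * ysoc Δt ηp ηm xb xr u d y0 k + (1 - θ) * ysoc Δt ηp ηm xb xr v d y0 k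
          ≤ ysoc Δt ηp ηm xb xr (fun l => θ * u l + (1 - θ) * v l) d y0 k) ∧
      (∀ xb xr : Fin K → ℝ, ∀ y0 : ℝ, (∀ l, 0 ≤ xr l) →
        ∀ u v : Fin K → ℝ, (∀ l, u l ≤ v l) →
        ysoc Δt ηp ηm xb xr u d y0 k ≤ ysoc Δt ηp ηm xb xr v d y0 k)) ∧
    -- (iv) affine and nondecreasing in y₀
    (∀ xb xr δ : Fin K → ℝ,
      (∀ y0 : ℝ, ysoc Δt ηp ηm xb xr δ d y0 k = y0 + ysoc Δt ηp ηm xb xr δ d 0 k) ∧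
      Monotone (fun y0 : ℝ => ysoc Δt ηp ηm xb xr δ d y0 k)) := by
  obtain ⟨hp, hp1⟩ := hηp
  obtain ⟨hm, hm1⟩ := hηm
  refine ⟨⟨?_, ?_⟩, ?_, ⟨?_, ?_⟩, ?_⟩
  · intro xr δ y0 u v θ hθ
    simp only [ysoc]
    exact ysum_concave Δt ηp ηm hΔt.le hp hp1 hm hm1 d k
      (fun l => u l + δ l * xr l) (fun l => v l + δ l * xr l) _
      θ hθ.1 hθ.2 (fun l => by ring) y0
  · intro xr δ y0 u v huv
    simp only [ysoc]
    exact ysum_mono Δt ηp ηm hΔt.le hp hp1 hm hm1 d k _ _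
      (fun l => by have := huv l; linarith) y0
  · intro xb δ y0 u v θ hθ
    simp only [ysoc]
    exact ysum_concave Δt ηp ηm hΔt.le hp hp1 hm hm1 d k
      (fun l => xb l + δ l * u l) (fun l => xb l + δ l * v l) _
      θ hθ.1 hθ.2 (fun l => by ring) y0
  · intro xb xr y0 hxr u v θ hθ
    simp only [ysoc]
    exact ysum_concave Δt ηp ηm hΔt.le hp hp1 hm hm1 d k
      (fun l => xb l + u l * xr l) (fun l => xb l + v l * xr l) _
      θ hθ.1 hθ.2 (fun l => by ring) y0
  · intro xb xr y0 hxr u v huv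
    simp only [ysoc]
    exact ysum_mono Δt ηp ηm hΔt.le hp hp1 hm hm1 d k _ _
      (fun l => by nlinarith [huv l, hxr l]) y0
  · intro xb xr δ
    constructor
    · intro y0; simp [ysoc]
    · intro a b hab; simp only [ysoc]; linarith
end
end

section
/- Let T > 0, 0 < γ ≤ Γ ≤ T, and Δt > 0 with K = T/Δt a positive integer and γ/Δt, Γ/Δt positive integers. Let 𝐱^b, 𝐱^r ∈ ℝ^K have nonnegative components, let ȳ⁺, ȳ⁻ ∈ ℝ^K, and let x^b = L𝐱^b, x^r = L𝐱^r be the piecewise constant lifts. Then: (i) the continuous robust charging constraint ([x^b(t)+δ(t)x^r(t)]⁺ ≤ (Lȳ⁺)(t) for all δ ∈ D and all t ∈ [0,T]) holds if and only if the discrete robust charging constraint ([x^b_k+δ_k x^r_k]⁺ ≤ ȳ⁺_k for all 𝛅 ∈ D_K and all k ∈ {1,…,K}) holds, and both are equivalent to x^b_k + x^r_k ≤ ȳ⁺_k for all k; (ii) the continuous robust discharging constraint ([x^b(t)+δ(t)x^r(t)]⁻ ≤ (Lȳ⁻)(t) for all δ ∈ D and all t ∈ [0,T]) holds if and only if the discrete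 robust discharging constraint ([x^b_k+δ_k x^r_k]⁻ ≤ ȳ⁻_k for all 𝛅 ∈ D_K and all k ∈ {1,…,K}) holds. -/
open MeasureTheory Set

noncomputable section

lemma lift_apply (Δt : ℝ) {K : ℕ} (hK : 0 < K) (v : Fin K → ℝ) (t : ℝ) :
    lift Δt v t = v ⟨min (⌊t / Δt⌋.toNat) (K - 1), by omega⟩ := by
  unfold lift
  rw [dif_pos]

lemma single_mem_Dset {T Γ γ : ℝ} (hγ : 0 < γ) (t₀ a : ℝ) (ha : |a| ≤ 1) :
    (fun s => if s = t₀ then a else 0) ∈ Dset T Γ γ := by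
  have ha' := abs_le.mp ha
  refine ⟨?_, ?_, ?_⟩
  · exact Measurable.ite (by simpa [Set.setOf_eq_eq_singleton] using
      (MeasurableSet.singleton t₀)) measurable_const measurable_const
  · intro t ht
    by_cases h : t = t₀ <;> simp [h, mem_Icc, ha'.1, ha'.2]
  · intro t ht
    have hae : ∀ᵐ s : ℝ, s ≠ t₀ := by
      have h0 : (volume : Measure ℝ) {t₀} = 0 := measure_singleton t₀
      rw [Filter.Eventually, MeasureTheory.mem_ae_iff]
      convert h0 using 2
      ext s; simp
    have hz : (∫ s in (max (t - Γ) 0)..t, |if s = t₀ then a else 0|) = 0 := by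
      rw [intervalIntegral.integral_congr_ae (g := fun _ => (0:ℝ)) ?_,
        intervalIntegral.integral_zero]
      filter_upwards [hae] with s hs _
      simp [hs]
    linarith

lemma single_mem_DK {K W g : ℕ} (hg : 0 < g) (k : Fin K) (a : ℝ) (ha : |a| ≤ 1) :
    (fun l => if l = k then a else 0) ∈ DK K W g := by
  constructor
  · intro l; by_cases h : l = k <;> simp [h, ha]
  · intro j
    calc (∑ l ∈ Finset.univ.filter
          (fun l : Fin K => (j : ℕ) + 1 - W ≤ (l : ℕ) ∧ (l : ℕ) ≤ (j : ℕ)),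
          |if l = k then a else 0|)
        ≤ ∑ l ∈ Finset.univ, |if l = k then a else 0| :=
          Finset.sum_le_sum_of_subset_of_nonneg (Finset.filter_subset _ _)
            (fun _ _ _ => abs_nonneg _)
      _ = |a| := by
          simp [apply_ite (|·|)]
      _ ≤ 1 := ha
      _ ≤ (g : ℝ) := by exact_mod_cast hg

/-- Proposition 5: equivalence of the continuous and discrete
robust charging/discharging constraints, and their reduction to deterministic
linear constraints. -/
theorem stmt_7 (Δt : ℝ) (K W g : ℕ) (hΔt : 0 < Δt)
    (hg : 0 < g) (hgW : g ≤ W) (hWK : W ≤ K)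
    (T Γ γ : ℝ) (hT : T = K * Δt) (hΓ : Γ = W * Δt) (hγ : γ = g * Δt)
    (xb xr ybarp ybarm : Fin K → ℝ)
    (hxb : ∀ l, 0 ≤ xb l) (hxr : ∀ l, 0 ≤ xr l) :
    -- (i) charging constraint
    ((∀ δ ∈ Dset T Γ γ, ∀ t ∈ Icc (0:ℝ) T,
        max (lift Δt xb t + δ t * lift Δt xr t) 0 ≤ lift Δt ybarp t) ↔
      (∀ δv ∈ DK K W g, ∀ k : Fin K, max (xb k + δv k * xr k) 0 ≤ ybarp k)) ∧
    ((∀ δv ∈ DK K W g, ∀ k : Fin K, max (xb k + δv k * xr k) 0 ≤ ybarp k) ↔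
      (∀ k : Fin K, xb k + xr k ≤ ybarp k)) ∧
    -- (ii) discharging constraint
    ((∀ δ ∈ Dset T Γ γ, ∀ t ∈ Icc (0:ℝ) T,
        max (-(lift Δt xb t + δ t * lift Δt xr t)) 0 ≤ lift Δt ybarm t) ↔
      (∀ δv ∈ DK K W g, ∀ k : Fin K, max (-(xb k + δv k * xr k)) 0 ≤ ybarm k)) := by
  have hK : 0 < K := hg.trans_le (hgW.trans hWK)
  have hγpos : 0 < γ := by rw [hγ]; positivity
  -- index at t = k * Δt
  have hfloor : ∀ k : Fin K, min (⌊(((k : ℕ) : ℝ) * Δt) / Δt⌋.toNat) (K - 1) = (k : ℕ) := by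
    intro k
    rw [mul_div_cancel_right₀ _ hΔt.ne', Int.floor_natCast, Int.toNat_natCast]
    have := k.isLt; omega
  have htmem : ∀ k : Fin K, ((k : ℕ) : ℝ) * Δt ∈ Icc (0:ℝ) T := by
    intro k
    constructor
    · positivity
    · rw [hT]
      have hk : ((k : ℕ) : ℝ) ≤ (K : ℝ) := by exact_mod_cast k.isLt.le
      nlinarith
  have hlift : ∀ (v : Fin K → ℝ) (k : Fin K), lift Δt v (((k : ℕ) : ℝ) * Δt) = v k := by
    intro v k
    rw [lift_apply Δt hK]
    exact congrArg v (Fin.ext (hfloor k))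
  -- abstract transfer lemma: for any F : ℝ → ℝ monotone-free form, continuous ↔ pointwise ↔ discrete
  have key : ∀ (F : ℝ → ℝ → ℝ) (ybar : Fin K → ℝ),
      ((∀ δ ∈ Dset T Γ γ, ∀ t ∈ Icc (0:ℝ) T,
          F (lift Δt xb t + δ t * lift Δt xr t) 0 ≤ lift Δt ybar t) ↔
        (∀ k : Fin K, ∀ a : ℝ, |a| ≤ 1 → F (xb k + a * xr k) 0 ≤ ybar k)) ∧
      ((∀ δv ∈ DK K W g, ∀ k : Fin K, F (xb k + δv k * xr k) 0 ≤ ybar k) ↔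
        (∀ k : Fin K, ∀ a : ℝ, |a| ≤ 1 → F (xb k + a * xr k) 0 ≤ ybar k)) := by
    intro F ybar
    constructor
    · constructor
      · intro hc k a ha
        have := hc (fun s => if s = ((k : ℕ) : ℝ) * Δt then a else 0)
          (single_mem_Dset hγpos _ a ha) (((k : ℕ) : ℝ) * Δt) (htmem k)
        simpa [hlift] using this
      · intro hq δ hδ t ht
        rw [lift_apply Δt hK, lift_apply Δt hK, lift_apply Δt hK]
        exact hq _ (δ t) (abs_le.mpr (hδ.2.1 t ht))
    · constructor
      · intro hd k a ha
        have := hd (fun l => if l = k then a else 0) (single_mem_DK hg k a ha) k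
        simpa using this
      · intro hq δv hδv k
        exact hq k (δv k) (hδv.1 k)
  obtain ⟨hc1, hd1⟩ := key (fun z w => max z w) ybarp
  obtain ⟨hc2, hd2⟩ := key (fun z w => max (-z) w) ybarm
  refine ⟨hc1.trans hd1.symm, hd1.trans ?_, hc2.trans hd2.symm⟩
  constructor
  · intro hq k
    have := hq k 1 (by norm_num)
    rw [one_mul] at this
    exact (le_max_left _ _).trans this
  · intro hdet k a ha
    have h1 : a * xr k ≤ xr k := by
      nlinarith [(abs_le.mp ha).2, hxr k, hxb k]
    have h0 : (0:ℝ) ≤ ybarp k := le_trans (add_nonneg (hxb k) (hxr k)) (hdet k)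
    exact max_le (by linarith [hdet k]) h0
end
end

section
/- Let T > 0, 0 < γ ≤ Γ ≤ T, Δt > 0 with K = T/Δt a positive integer and γ/Δt, Γ/Δt positive integers, and η⁺, η⁻ ∈ (0,1]. Let 𝐱^b, 𝐱^r ∈ ℝ^K have nonnegative components, let 𝐝 ∈ ℝ^K have nonnegative components, and assume that for every k ∈ {1,…,K} either d_k = 0 or x^b_k = x^r_k = 0. Set x^b = L𝐱^b, x^r = L𝐱^r, d = L𝐝, and fix y₀ ∈ ℝ and ȳ ∈ ℝ. Then y(x^b,x^r,δ,y₀,t) ≤ ȳ for all δ ∈ D and all t ∈ [0,T] if and only if y_k(𝐱^b,𝐱^r,𝛅,y₀) ≤ ȳ for all 𝛅 ∈ D_K and all k ∈ {0,1,…,K}; indeed sup_{t ∈ [0,T]} sup_{δ ∈ D} y(x^b,x^r,δ,y₀,t) = max_{k ∈ {0,…,K}} max_{𝛅 ∈ D_K} y_k(𝐱^b,𝐱^r,𝛅,y₀). -/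
open MeasureTheory Set

noncomputable section

namespace Stmt8Aux

lemma measurable_lift (Δt : ℝ) {K : ℕ} (v : Fin K → ℝ) : Measurable (lift Δt v) := by
  have h : lift Δt v = (fun n : ℕ => if h : min n (K-1) < K then v ⟨min n (K-1), h⟩ else 0)
      ∘ (fun t : ℝ => (⌊t / Δt⌋).toNat) := rfl
  rw [h]
  exact (measurable_from_top).comp (by measurability)

lemma lift_mem_range {Δt : ℝ} {K : ℕ} (hK : 0 < K) (v : Fin K → ℝ) (t : ℝ) :
    ∃ l : Fin K, lift Δt v t = v l := by
  have h : min (⌊t / Δt⌋.toNat) (K - 1) < K :=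
    lt_of_le_of_lt (min_le_right _ _) (Nat.sub_lt hK one_pos)
  exact ⟨_, by rw [lift, dif_pos h]⟩

lemma lift_eq {Δt : ℝ} (hΔt : 0 < Δt) {K : ℕ} (v : Fin K → ℝ) {m : ℕ} (hm : m < K)
    {s : ℝ} (h1 : (m : ℝ) * Δt ≤ s) (h2 : s < ((m : ℝ) + 1) * Δt) :
    lift Δt v s = v ⟨m, hm⟩ := by
  have hfl : ⌊s / Δt⌋ = (m : ℤ) := by
    rw [Int.floor_eq_iff]
    constructor
    · push_cast; rw [le_div_iff₀ hΔt]; linarith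
    · push_cast; rw [div_lt_iff₀ hΔt]; linarith
  have : (⌊s / Δt⌋).toNat = m := by rw [hfl]; simp
  rw [lift, this]
  have hmin : min m (K - 1) = m := min_eq_left (by omega)
  rw [dif_pos (hmin ▸ (by omega : min m (K-1) < K))]
  congr 1
  exact Fin.ext (by simp [hmin])

lemma exists_grid {Δt : ℝ} (hΔt : 0 < Δt) {K : ℕ} (hK : 0 < K) {t : ℝ}
    (h0 : 0 ≤ t) (hT : t ≤ (K : ℝ) * Δt) :
    ∃ m : ℕ, m < K ∧ (m : ℝ) * Δt ≤ t ∧ t ≤ ((m : ℝ) + 1) * Δt := by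
  set n := (⌊t / Δt⌋).toNat with hn
  have h0' : 0 ≤ t / Δt := div_nonneg h0 hΔt.le
  have hcast : ((n : ℤ) : ℝ) = ((⌊t / Δt⌋ : ℤ) : ℝ) := by
    rw [hn, Int.toNat_of_nonneg (Int.floor_nonneg.mpr h0')]
  by_cases hnK : n < K
  · refine ⟨n, hnK, ?_, ?_⟩
    · have := Int.floor_le (t / Δt)
      rw [← hcast] at this
      rw [← le_div_iff₀ hΔt]; exact_mod_cast this
    · have := (Int.lt_floor_add_one (t / Δt)).le
      rw [← hcast] at this
      rw [← div_le_iff₀ hΔt]; exact_mod_cast this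
  · refine ⟨K - 1, by omega, ?_, ?_⟩
    · calc ((K - 1 : ℕ) : ℝ) * Δt ≤ (K : ℝ) * Δt := by
            apply mul_le_mul_of_nonneg_right _ hΔt.le
            exact_mod_cast Nat.sub_le K 1
        _ = t := ?_
      · -- t = K * Δt
        have h1 : (K : ℝ) ≤ t / Δt := by
          have := Int.floor_le (t / Δt)
          rw [← hcast] at this
          have : (n : ℝ) ≤ t / Δt := by exact_mod_cast this
          have hKn : (K : ℝ) ≤ n := by exact_mod_cast (by omega : K ≤ n)
          linarith
        have h2 : t / Δt ≤ K := by rw [div_le_iff₀ hΔt]; linarith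
        have : t / Δt = K := le_antisymm h2 h1
        field_simp at this
        linarith [this]
    · have hcast2 : ((K - 1 : ℕ) : ℝ) + 1 = K := by
        have : 1 ≤ K := hK
        push_cast [Nat.cast_sub this]; ring
      rw [hcast2]; exact hT

lemma II_of_bound {f : ℝ → ℝ} (C : ℝ) (hm : Measurable f) (h : ∀ x, |f x| ≤ C) (a b : ℝ) :
    IntervalIntegrable f volume a b :=
  (intervalIntegrable_const (c := C)).mono_fun' hm.aestronglyMeasurable.restrict
    (Filter.Eventually.of_forall (by simpa using h))

lemma integral_congr_Ico {f g : ℝ → ℝ} {a b : ℝ} (hab : a ≤ b)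
    (h : ∀ x ∈ Ico a b, f x = g x) :
    ∫ x in a..b, f x = ∫ x in a..b, g x := by
  apply intervalIntegral.integral_congr_ae
  have hb : ∀ᵐ x : ℝ, x ≠ b := by
    rw [MeasureTheory.ae_iff]
    simpa using measure_singleton b
  filter_upwards [hb] with x hx hmem
  rw [uIoc_of_le hab] at hmem
  exact h x ⟨hmem.1.le, lt_of_le_of_ne hmem.2 hx⟩



/-- termwise key inequality -/
lemma key_ineq {ηp ηm X R z : ℝ} (hηp : 0 ≤ ηp) (hηm : 0 < ηm) (hX : 0 ≤ X) (hR : 0 ≤ R) :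
    ηp * max (X + z * R) 0 - (1 / ηm) * max (-(X + z * R)) 0 ≤ ηp * (X + |z| * R) := by
  have h1 : max (X + z * R) 0 ≤ X + |z| * R := by
    apply max_le _ (by positivity)
    have : z * R ≤ |z| * R := mul_le_mul_of_nonneg_right (le_abs_self z) hR
    linarith
  have h2 : 0 ≤ (1 / ηm) * max (-(X + z * R)) 0 := by positivity
  nlinarith

/-- equality when z ≥ 0 -/
lemma key_eq {ηp ηm X R z : ℝ} (hX : 0 ≤ X) (hR : 0 ≤ R) (hz : 0 ≤ z) :
    ηp * max (X + z * R) 0 - (1 / ηm) * max (-(X + z * R)) 0 = ηp * (X + z * R) := by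
  have h0 : 0 ≤ X + z * R := by positivity
  rw [max_eq_left h0, max_eq_right (by linarith), mul_zero, sub_zero]

/-- sum over Fin K filter versus Ico -/
lemma sum_fin_filter {K : ℕ} (f : Fin K → ℝ) (f' : ℕ → ℝ)
    (hff : ∀ l : Fin K, f l = f' (l : ℕ)) (i j : ℕ) (hj : j ≤ K) :
    ∑ l ∈ Finset.univ.filter (fun l : Fin K => i ≤ (l : ℕ) ∧ (l : ℕ) < j), f l
      = ∑ l ∈ Finset.Ico i j, f' l := by
  rw [Finset.sum_filter]
  have h1 : ∀ l : Fin K, (if i ≤ (l : ℕ) ∧ (l : ℕ) < j then f l else 0)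
      = (fun n : ℕ => if i ≤ n ∧ n < j then f' n else 0) (l : ℕ) := by
    intro l; by_cases h : i ≤ (l : ℕ) ∧ (l : ℕ) < j <;> simp [h, hff]
  rw [Finset.sum_congr rfl (fun l _ => h1 l),
    Fin.sum_univ_eq_sum_range (fun n => if i ≤ n ∧ n < j then f' n else 0) K,
    ← Finset.sum_filter]
  apply Finset.sum_congr _ (fun _ _ => rfl)
  ext l
  simp only [Finset.mem_filter, Finset.mem_range, Finset.mem_Ico]
  omega

lemma grid_sum {Δt : ℝ} {f : ℝ → ℝ} (hf : ∀ a b : ℝ, IntervalIntegrable f volume a b) :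
    ∀ k : ℕ, ∫ s in (0:ℝ)..((k : ℝ) * Δt), f s
      = ∑ l ∈ Finset.range k, ∫ s in ((l : ℝ) * Δt)..(((l : ℝ) + 1) * Δt), f s := by
  intro k
  induction k with
  | zero => simp
  | succ n ih =>
    rw [Finset.sum_range_succ, ← ih]
    have hcast : ((n + 1 : ℕ) : ℝ) * Δt = ((n : ℝ) + 1) * Δt := by push_cast; ring
    rw [hcast, intervalIntegral.integral_add_adjacent_intervals (hf _ _) (hf _ _)]

/-- difference of prefix integrals -/
lemma integral_Ico_sum {Δt : ℝ} {f : ℝ → ℝ} (hf : ∀ a b : ℝ, IntervalIntegrable f volume a b)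
    {i j : ℕ} (hij : i ≤ j) :
    ∫ s in ((i : ℝ) * Δt)..((j : ℝ) * Δt), f s
      = ∑ l ∈ Finset.Ico i j, ∫ s in ((l : ℝ) * Δt)..(((l : ℝ) + 1) * Δt), f s := by
  rw [Finset.sum_Ico_eq_sub _ hij, ← grid_sum hf, ← grid_sum hf,
    intervalIntegral.integral_interval_sub_left (hf _ _) (hf _ _)]

lemma measurable_socIntegrand {ηp ηm : ℝ} {xb xr δ d : ℝ → ℝ}
    (h1 : Measurable xb) (h2 : Measurable xr) (h3 : Measurable δ) (h4 : Measurable d) :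
    Measurable (fun s => ηp * max (xb s + δ s * xr s) 0
      - (1 / ηm) * max (-(xb s + δ s * xr s)) 0 - d s) := by
  measurability

lemma abs_socIntegrand_le {ηp ηm X R z D Bb Br Bd : ℝ} (hηp : 0 ≤ ηp) (hηm : 0 < ηm)
    (hX : |X| ≤ Bb) (hR : |R| ≤ Br) (hz : |z| ≤ 1) (hD : |D| ≤ Bd) :
    |ηp * max (X + z * R) 0 - (1 / ηm) * max (-(X + z * R)) 0 - D|
      ≤ ηp * (Bb + Br) + (1 / ηm) * (Bb + Br) + Bd := by
  have hη : 0 ≤ 1 / ηm := by positivity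
  have habs : |X + z * R| ≤ Bb + Br := by
    calc |X + z * R| ≤ |X| + |z * R| := abs_add_le _ _
      _ ≤ Bb + Br := by
          rw [abs_mul]
          have : |z| * |R| ≤ 1 * Br :=
            mul_le_mul hz hR (abs_nonneg _) zero_le_one
          linarith
  have h1 : |max (X + z * R) 0| ≤ Bb + Br := by
    rw [abs_of_nonneg (le_max_right _ _)]
    exact max_le (le_trans (le_abs_self _) habs) (by linarith [abs_nonneg (X + z*R)])
  have h2 : |max (-(X + z * R)) 0| ≤ Bb + Br := by
    rw [abs_of_nonneg (le_max_right _ _)]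
    exact max_le (le_trans (neg_le_abs _) habs) (by linarith [abs_nonneg (X + z*R)])
  calc |ηp * max (X + z * R) 0 - (1 / ηm) * max (-(X + z * R)) 0 - D|
      ≤ |ηp * max (X + z * R) 0| + |(1 / ηm) * max (-(X + z * R)) 0| + |D| := by
        have := abs_sub (ηp * max (X + z * R) 0 - (1 / ηm) * max (-(X + z * R)) 0) D
        have := abs_sub (ηp * max (X + z * R) 0) ((1 / ηm) * max (-(X + z * R)) 0)
        calc |ηp * max (X + z * R) 0 - (1 / ηm) * max (-(X + z * R)) 0 - D|
            ≤ |ηp * max (X + z * R) 0 - (1 / ηm) * max (-(X + z * R)) 0| + |D| :=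
              abs_sub _ _
          _ ≤ |ηp * max (X + z * R) 0| + |(1 / ηm) * max (-(X + z * R)) 0| + |D| := by
              linarith [abs_sub (ηp * max (X + z * R) 0) ((1 / ηm) * max (-(X + z * R)) 0)]
    _ ≤ ηp * (Bb + Br) + (1 / ηm) * (Bb + Br) + Bd := by
        rw [abs_mul, abs_mul, abs_of_nonneg hηp, abs_of_nonneg hη]
        have := mul_le_mul_of_nonneg_left h1 hηp
        have := mul_le_mul_of_nonneg_left h2 hη
        linarith

lemma exists_bound {K : ℕ} (v : Fin K → ℝ) : ∃ B : ℝ, 0 ≤ B ∧ ∀ l, |v l| ≤ B := by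
  refine ⟨∑ l, |v l|, Finset.sum_nonneg (fun l _ => abs_nonneg _), fun l => ?_⟩
  exact Finset.single_le_sum (fun i _ => abs_nonneg (v i)) (Finset.mem_univ l)


set_option maxHeartbeats 1000000 in
lemma lift_window_bound {Δt : ℝ} (hΔt : 0 < Δt) {K W g : ℕ} (hWK : W ≤ K) (hK : 0 < K)
    {δ' : Fin K → ℝ} (h0 : ∀ l, 0 ≤ δ' l) (h1 : ∀ l, δ' l ≤ 1)
    (hw : ∀ k : Fin K, (∑ l ∈ Finset.univ.filter
      (fun l : Fin K => (k : ℕ) + 1 - W ≤ (l : ℕ) ∧ (l : ℕ) ≤ (k : ℕ)), |δ' l|) ≤ (g : ℝ))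
    {t : ℝ} (ht0 : 0 ≤ t) (htT : t ≤ (K : ℝ) * Δt) :
    (∫ s in (max (t - (W : ℝ) * Δt) 0)..t, |lift Δt δ' s|) ≤ (g : ℝ) * Δt := by
  set L := lift Δt δ' with hL
  have hnn : ∀ s, 0 ≤ L s := by
    intro s; obtain ⟨l, hl⟩ := lift_mem_range hK δ' s; rw [hL, hl]; exact h0 l
  have hb1 : ∀ s, |L s| ≤ 1 := by
    intro s; obtain ⟨l, hl⟩ := lift_mem_range hK δ' s
    rw [hL, hl, abs_of_nonneg (h0 l)]; exact h1 l
  have hInt : ∀ a b : ℝ, IntervalIntegrable L volume a b :=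
    II_of_bound 1 (measurable_lift Δt δ') hb1
  set e : ℕ → ℝ := fun l => if h : l < K then δ' ⟨l, h⟩ else 0 with he
  have he_eq : ∀ (l : ℕ) (h : l < K), e l = δ' ⟨l, h⟩ := fun l h => dif_pos h
  set F : ℝ → ℝ := fun u => ∫ s in (0:ℝ)..u, L s with hF
  have hFdiff : ∀ a b : ℝ, F b - F a = ∫ s in a..b, L s := fun a b =>
    intervalIntegral.integral_interval_sub_left (hInt 0 b) (hInt 0 a)
  have hFmono : ∀ a b : ℝ, a ≤ b → F a ≤ F b := by
    intro a b hab
    have h := hFdiff a b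
    have : 0 ≤ ∫ s in a..b, L s :=
      intervalIntegral.integral_nonneg hab (fun u _ => hnn u)
    linarith
  have piece : ∀ {l : ℕ}, l < K →
      ∫ s in ((l : ℝ) * Δt)..(((l : ℝ) + 1) * Δt), L s = Δt * e l := by
    intro l hl
    have h1' : (l : ℝ) * Δt ≤ ((l : ℝ) + 1) * Δt := by nlinarith
    rw [integral_congr_Ico h1' (fun x hx => lift_eq hΔt δ' hl hx.1 hx.2),
      intervalIntegral.integral_const, he_eq l hl, smul_eq_mul]
    ring
  have hFgrid : ∀ k : ℕ, k ≤ K → F ((k : ℝ) * Δt) = Δt * ∑ l ∈ Finset.range k, e l := by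
    intro k hk
    show (∫ s in (0:ℝ)..((k : ℝ) * Δt), L s) = _
    rw [grid_sum hInt k, Finset.mul_sum]
    exact Finset.sum_congr rfl (fun l hl => piece (lt_of_lt_of_le (Finset.mem_range.mp hl) hk))
  have gridwin : ∀ j : ℕ, j ≤ K → F ((j : ℝ) * Δt) - F (((j - W : ℕ) : ℝ) * Δt) ≤ (g : ℝ) * Δt := by
    intro j hj
    match j with
    | 0 => simp; positivity
    | (j' + 1) =>
      have hj' : j' < K := by omega
      have hwk := hw ⟨j', hj'⟩
      have hfilt : (Finset.univ.filter
            (fun l : Fin K => (j' : ℕ) + 1 - W ≤ (l : ℕ) ∧ (l : ℕ) ≤ j'))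
          = (Finset.univ.filter
            (fun l : Fin K => (j' + 1 - W : ℕ) ≤ (l : ℕ) ∧ (l : ℕ) < j' + 1)) := by
        ext l; simp only [Finset.mem_filter, Finset.mem_univ, true_and]; omega
      rw [hfilt] at hwk
      rw [sum_fin_filter (fun l => |δ' l|) e
        (fun l => by show |δ' l| = e (l : ℕ); rw [he_eq l l.isLt, Fin.eta, abs_of_nonneg (h0 l)]) _ _ hj] at hwk
      rw [hFgrid _ hj, hFgrid _ (by omega),
        ← mul_sub, ← Finset.sum_Ico_eq_sub e (by omega : j' + 1 - W ≤ j' + 1)]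
      calc Δt * ∑ l ∈ Finset.Ico (j' + 1 - W) (j' + 1), e l ≤ Δt * g :=
            mul_le_mul_of_nonneg_left hwk hΔt.le
        _ = (g : ℝ) * Δt := mul_comm _ _
  -- remove abs
  have habs : (∫ s in (max (t - (W : ℝ) * Δt) 0)..t, |L s|)
      = ∫ s in (max (t - (W : ℝ) * Δt) 0)..t, L s :=
    intervalIntegral.integral_congr (fun x _ => abs_of_nonneg (hnn x))
  set a := max (t - (W : ℝ) * Δt) 0 with ha
  have hat : a ≤ t := max_le (by linarith [mul_nonneg (Nat.cast_nonneg W : (0:ℝ) ≤ W) hΔt.le]) ht0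
  rw [habs, ← hFdiff a t]
  obtain ⟨m, hmK, hm1, hm2⟩ := exists_grid hΔt hK ht0 htT
  by_cases hmW : m + 1 ≤ W
  · -- a = 0
    have hWr : ((m : ℝ) + 1) ≤ (W : ℝ) := by exact_mod_cast hmW
    have ha0 : a = 0 := max_eq_right (by nlinarith)
    have hF0 : F 0 = 0 := by simp [hF]
    have h2 : F t ≤ F (((m + 1 : ℕ) : ℝ) * Δt) := hFmono _ _ (by push_cast; linarith)
    have h3 := gridwin (m + 1) (by omega)
    have h4 : (m + 1 - W : ℕ) = 0 := by omega
    rw [h4] at h3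
    simp only [Nat.cast_zero, zero_mul] at h3
    rw [ha0, hF0]
    linarith
  · -- W ≤ m
    have hWm : W ≤ m := by omega
    have hWr : (W : ℝ) ≤ (m : ℝ) := by exact_mod_cast hWm
    set p := m - W with hp
    have hpcast : (p : ℝ) = (m : ℝ) - (W : ℝ) := by
      rw [hp, Nat.cast_sub hWm]
    have hpK : p < K := by omega
    have hta : a = t - (W : ℝ) * Δt := max_eq_left (by nlinarith)
    -- affine formulas
    have haff1 : F t - F ((m : ℝ) * Δt) = (t - (m : ℝ) * Δt) * e m := by
      rw [hFdiff, integral_congr_Ico hm1 (fun x hx =>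
        lift_eq hΔt δ' hmK hx.1 (lt_of_lt_of_le hx.2 hm2)), intervalIntegral.integral_const,
        he_eq m hmK]
      simp
    have haff2 : F a - F ((p : ℝ) * Δt) = (t - (m : ℝ) * Δt) * e p := by
      have hap1 : (p : ℝ) * Δt ≤ a := by rw [hta, hpcast]; nlinarith
      have hap2 : a ≤ ((p : ℝ) + 1) * Δt := by rw [hta, hpcast]; nlinarith
      rw [hFdiff, integral_congr_Ico hap1 (fun x hx =>
        lift_eq hΔt δ' hpK hx.1 (lt_of_lt_of_le hx.2 hap2)), intervalIntegral.integral_const,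
        he_eq p hpK, smul_eq_mul, hta, hpcast]
      ring
    have hθ1 : 0 ≤ t - (m : ℝ) * Δt := by linarith
    have hθ2 : t - (m : ℝ) * Δt ≤ Δt := by nlinarith
    by_cases hcmp : e m ≤ e p
    · have h3 := gridwin m (by omega)
      have h4 : ((m - W : ℕ) : ℝ) = (p : ℝ) := by rw [hp]
      rw [h4] at h3
      nlinarith
    · push_neg at hcmp
      have h3 := gridwin (m + 1) (by omega)
      have h4 : ((m + 1 - W : ℕ) : ℝ) = (p : ℝ) + 1 := by
        rw [Nat.cast_sub (by omega)]; rw [hpcast]; push_cast; ring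
      rw [h4] at h3
      have hs1 : F (((m + 1 : ℕ) : ℝ) * Δt) = F ((m : ℝ) * Δt) + Δt * e m := by
        have hc : ((m + 1 : ℕ) : ℝ) * Δt = ((m : ℝ) + 1) * Δt := by push_cast; ring
        rw [hc]
        linarith [piece hmK, hFdiff ((m : ℝ) * Δt) (((m : ℝ) + 1) * Δt)]
      have hs2 : F (((p : ℝ) + 1) * Δt) = F ((p : ℝ) * Δt) + Δt * e p := by
        have := piece hpK
        have hd := hFdiff ((p : ℝ) * Δt) (((p : ℝ) + 1) * Δt)
        linarith
      have hprod := mul_le_mul_of_nonneg_right hθ2 (by linarith : (0:ℝ) ≤ e m - e p)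
      rw [hs1, hs2] at h3
      nlinarith [hprod]


lemma lift_abs_le {Δt : ℝ} {K : ℕ} (hK : 0 < K) {v : Fin K → ℝ} {B : ℝ}
    (h : ∀ l, |v l| ≤ B) (s : ℝ) : |lift Δt v s| ≤ B := by
  obtain ⟨l, hl⟩ := lift_mem_range hK v s; rw [hl]; exact h l

lemma lift_nonneg {Δt : ℝ} {K : ℕ} (hK : 0 < K) {v : Fin K → ℝ}
    (h : ∀ l, 0 ≤ v l) (s : ℝ) : 0 ≤ lift Δt v s := by
  obtain ⟨l, hl⟩ := lift_mem_range hK v s; rw [hl]; exact h l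

lemma filter_lt_eq {K : ℕ} (k : ℕ) :
    (Finset.univ.filter (fun l : Fin K => (l : ℕ) < k))
      = Finset.univ.filter (fun l : Fin K => 0 ≤ (l : ℕ) ∧ (l : ℕ) < k) := by
  ext l; simp only [Finset.mem_filter, Finset.mem_univ, true_and]; omega

/-- soc of lifted data at grid points equals ysoc. -/
lemma soc_lift_grid {Δt : ℝ} (hΔt : 0 < Δt) {K : ℕ} (hK : 0 < K)
    {ηp ηm : ℝ} (hηp : 0 ≤ ηp) (hηm : 0 < ηm)
    (xb xr d δ' : Fin K → ℝ) (hδ'1 : ∀ l, |δ' l| ≤ 1) (y0 : ℝ) {k : ℕ} (hk : k ≤ K) :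
    soc ηp ηm (lift Δt xb) (lift Δt xr) (lift Δt δ') (lift Δt d) y0 ((k : ℝ) * Δt)
      = ysoc Δt ηp ηm xb xr δ' d y0 k := by
  obtain ⟨Bb, hBb0, hBb⟩ := exists_bound xb
  obtain ⟨Br, hBr0, hBr⟩ := exists_bound xr
  obtain ⟨Bd, hBd0, hBd⟩ := exists_bound d
  set f := socIntegrand ηp ηm (lift Δt xb) (lift Δt xr) (lift Δt δ') (lift Δt d) with hf
  have hfmeas : Measurable f :=
    measurable_socIntegrand (measurable_lift Δt xb) (measurable_lift Δt xr)
      (measurable_lift Δt δ') (measurable_lift Δt d)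
  have hfbd : ∀ s, |f s| ≤ ηp * (Bb + Br) + (1 / ηm) * (Bb + Br) + Bd := fun s =>
    abs_socIntegrand_le hηp hηm (lift_abs_le hK hBb s) (lift_abs_le hK hBr s)
      (lift_abs_le hK hδ'1 s) (lift_abs_le hK hBd s)
  have hfInt : ∀ a b : ℝ, IntervalIntegrable f volume a b := II_of_bound _ hfmeas hfbd
  set c : ℕ → ℝ := fun n => if h : n < K then
    (ηp * max (xb ⟨n, h⟩ + δ' ⟨n, h⟩ * xr ⟨n, h⟩) 0
      - (1 / ηm) * max (-(xb ⟨n, h⟩ + δ' ⟨n, h⟩ * xr ⟨n, h⟩)) 0 - d ⟨n, h⟩) else 0 with hc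
  have hceq : ∀ (n : ℕ) (h : n < K), c n =
      (ηp * max (xb ⟨n, h⟩ + δ' ⟨n, h⟩ * xr ⟨n, h⟩) 0
        - (1 / ηm) * max (-(xb ⟨n, h⟩ + δ' ⟨n, h⟩ * xr ⟨n, h⟩)) 0 - d ⟨n, h⟩) := by
    intro n h; simp only [hc]; rw [dif_pos h]
  have piece : ∀ {l : ℕ}, l < K →
      (∫ s in ((l : ℝ) * Δt)..(((l : ℝ) + 1) * Δt), f s) = Δt * c l := by
    intro l hl
    have h1' : (l : ℝ) * Δt ≤ ((l : ℝ) + 1) * Δt := by nlinarith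
    have hcongr : ∀ x ∈ Ico ((l : ℝ) * Δt) (((l : ℝ) + 1) * Δt), f x = c l := by
      intro x hx
      rw [hf, socIntegrand, lift_eq hΔt xb hl hx.1 hx.2, lift_eq hΔt xr hl hx.1 hx.2,
        lift_eq hΔt δ' hl hx.1 hx.2, lift_eq hΔt d hl hx.1 hx.2]
      exact (hceq l hl).symm
    rw [integral_congr_Ico h1' hcongr, intervalIntegral.integral_const, smul_eq_mul]
    ring
  rw [soc, grid_sum hfInt k, ysoc,
    Finset.sum_congr rfl (fun l hl => piece (lt_of_lt_of_le (Finset.mem_range.mp hl) hk)),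
    filter_lt_eq k,
    sum_fin_filter _ c (fun l => (hceq l l.isLt).symm) 0 k hk,
    ← Finset.range_eq_Ico, ← Finset.mul_sum]

/-- forward direction witness -/
lemma forward {Δt : ℝ} {K W g : ℕ} (hΔt : 0 < Δt) (hg : 0 < g) (hgW : g ≤ W) (hWK : W ≤ K)
    {T Γ γ : ℝ} (hT : T = K * Δt) (hΓ : Γ = W * Δt) (hγ : γ = g * Δt)
    {ηp ηm : ℝ} (hηp : 0 < ηp) (hηm : 0 < ηm)
    (xb xr d : Fin K → ℝ) (hxb : ∀ l, 0 ≤ xb l) (hxr : ∀ l, 0 ≤ xr l)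
    (y0 : ℝ) (δv : Fin K → ℝ) (hδv : δv ∈ DK K W g) (k : ℕ) (hk : k ≤ K) :
    ∃ δ ∈ Dset T Γ γ, ∃ t ∈ Icc (0:ℝ) T,
      ysoc Δt ηp ηm xb xr δv d y0 k
        ≤ soc ηp ηm (lift Δt xb) (lift Δt xr) δ (lift Δt d) y0 t := by
  have hK : 0 < K := by omega
  obtain ⟨hδv1, hδv2⟩ := hδv
  set δ' : Fin K → ℝ := fun l => |δv l| with hδ'def
  have hδ'0 : ∀ l, 0 ≤ δ' l := fun l => abs_nonneg _
  have hδ'1 : ∀ l, δ' l ≤ 1 := hδv1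
  have hδ'abs : ∀ l, |δ' l| ≤ 1 := fun l => by rw [hδ'def]; rw [abs_abs]; exact hδv1 l
  refine ⟨lift Δt δ', ⟨measurable_lift Δt δ', fun t _ => ⟨?_, ?_⟩, fun t ht => ?_⟩,
    (k : ℝ) * Δt, ⟨by positivity, ?_⟩, ?_⟩
  · obtain ⟨l, hl⟩ := lift_mem_range hK δ' t; rw [hl]; linarith [hδ'0 l]
  · obtain ⟨l, hl⟩ := lift_mem_range hK δ' t; rw [hl]; exact hδ'1 l
  · rw [hΓ, hγ]
    refine lift_window_bound hΔt hWK hK hδ'0 hδ'1 (fun kk => ?_) ht.1 (hT ▸ ht.2)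
    calc (∑ l ∈ Finset.univ.filter
          (fun l : Fin K => (kk : ℕ) + 1 - W ≤ (l : ℕ) ∧ (l : ℕ) ≤ (kk : ℕ)), |δ' l|)
        = ∑ l ∈ Finset.univ.filter
          (fun l : Fin K => (kk : ℕ) + 1 - W ≤ (l : ℕ) ∧ (l : ℕ) ≤ (kk : ℕ)), |δv l| := by
          apply Finset.sum_congr rfl; intro l _; rw [hδ'def]; exact abs_abs _
      _ ≤ (g : ℝ) := hδv2 kk
  · rw [hT]
    exact mul_le_mul_of_nonneg_right (by exact_mod_cast hk) hΔt.le
  · rw [soc_lift_grid hΔt hK hηp.le hηm xb xr d δ' hδ'abs y0 hk]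
    rw [ysoc, ysoc]
    have : ∀ l ∈ Finset.univ.filter (fun l : Fin K => (l : ℕ) < k),
        (ηp * max (xb l + δv l * xr l) 0 - (1 / ηm) * max (-(xb l + δv l * xr l)) 0 - d l)
        ≤ (ηp * max (xb l + δ' l * xr l) 0 - (1 / ηm) * max (-(xb l + δ' l * xr l)) 0 - d l) := by
      intro l _
      have h1 := key_ineq (z := δv l) hηp.le hηm (hxb l) (hxr l)
      have h2 := key_eq (ηp := ηp) (ηm := ηm) (z := δ' l) (hxb l) (hxr l) (hδ'0 l)
      rw [hδ'def] at h2 ⊢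
      simp only [] at h2 ⊢
      linarith
    have hsum := Finset.sum_le_sum this
    nlinarith [mul_le_mul_of_nonneg_left hsum hΔt.le]


lemma abs_A_le {ηp a b c z Bb Br Bd : ℝ} (hηp : 0 ≤ ηp)
    (ha : |a| ≤ Bb) (hb : |b| ≤ Br) (hz : |z| ≤ 1) (hc : |c| ≤ Bd) :
    |ηp * a + ηp * |z| * b - c| ≤ ηp * Bb + ηp * Br + Bd := by
  have h1 : |ηp * a| ≤ ηp * Bb := by
    rw [abs_mul, abs_of_nonneg hηp]; exact mul_le_mul_of_nonneg_left ha hηp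
  have h2 : |ηp * |z| * b| ≤ ηp * Br := by
    rw [abs_mul, abs_mul, abs_of_nonneg hηp, abs_abs]
    calc ηp * |z| * |b| ≤ ηp * 1 * Br := by
          apply mul_le_mul _ hb (abs_nonneg _) (by positivity)
          exact mul_le_mul_of_nonneg_left hz hηp
      _ = ηp * Br := by ring
  calc |ηp * a + ηp * |z| * b - c| ≤ |ηp * a + ηp * |z| * b| + |c| := abs_sub _ _
    _ ≤ |ηp * a| + |ηp * |z| * b| + |c| := by linarith [abs_add_le (ηp * a) (ηp * |z| * b)]
    _ ≤ ηp * Bb + ηp * Br + Bd := by linarith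

set_option maxHeartbeats 1000000 in
/-- backward direction witness -/
lemma backward {Δt : ℝ} {K W g : ℕ} (hΔt : 0 < Δt) (hg : 0 < g) (hgW : g ≤ W) (hWK : W ≤ K)
    {T Γ γ : ℝ} (hT : T = K * Δt) (hΓ : Γ = W * Δt) (hγ : γ = g * Δt)
    {ηp ηm : ℝ} (hηp : 0 < ηp) (hηm : 0 < ηm)
    (xb xr d : Fin K → ℝ) (hxb : ∀ l, 0 ≤ xb l) (hxr : ∀ l, 0 ≤ xr l) (hd : ∀ l, 0 ≤ d l)
    (hdx : ∀ l, d l = 0 ∨ (xb l = 0 ∧ xr l = 0))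
    (y0 : ℝ) (δ : ℝ → ℝ) (hδ : δ ∈ Dset T Γ γ) (t : ℝ) (ht : t ∈ Icc (0:ℝ) T) :
    ∃ δv ∈ DK K W g, ∃ k ≤ K,
      soc ηp ηm (lift Δt xb) (lift Δt xr) δ (lift Δt d) y0 t
        ≤ ysoc Δt ηp ηm xb xr δv d y0 k := by
  have hK : 0 < K := by omega
  obtain ⟨hδm, hδr, hδw⟩ := hδ
  obtain ⟨Bb, hBb0, hBb⟩ := exists_bound xb
  obtain ⟨Br, hBr0, hBr⟩ := exists_bound xr
  obtain ⟨Bd, hBd0, hBd⟩ := exists_bound d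
  have hT0 : 0 ≤ T := le_trans ht.1 ht.2
  -- truncated deviation
  set dt : ℝ → ℝ := fun s => max (-1) (min 1 (δ s)) with hdt
  have hdtm : Measurable dt := measurable_const.max (measurable_const.min hδm)
  have hdtb : ∀ s, |dt s| ≤ 1 := by
    intro s
    rw [abs_le]
    constructor
    · exact le_max_left _ _
    · exact max_le (by norm_num) (min_le_left _ _)
  have hdteq : ∀ s ∈ Icc (0:ℝ) T, dt s = δ s := by
    intro s hs
    obtain ⟨h1, h2⟩ := hδr s hs
    rw [hdt]
    simp only []
    rw [min_eq_right h2, max_eq_right h1]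
  -- continuous soc with truncated δ
  have hsoceq : soc ηp ηm (lift Δt xb) (lift Δt xr) δ (lift Δt d) y0 t
      = soc ηp ηm (lift Δt xb) (lift Δt xr) dt (lift Δt d) y0 t := by
    rw [soc, soc]
    congr 1
    apply intervalIntegral.integral_congr
    intro x hx
    rw [uIcc_of_le ht.1] at hx
    have hxT : x ∈ Icc (0:ℝ) T := ⟨hx.1, le_trans hx.2 ht.2⟩
    rw [socIntegrand, socIntegrand, hdteq x hxT]
  -- the majorant integrand A
  set A : ℝ → ℝ := fun s => ηp * lift Δt xb s + ηp * |dt s| * lift Δt xr s - lift Δt d s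
    with hA
  have hAmeas : Measurable A := by
    apply Measurable.sub
    apply Measurable.add
    · exact (measurable_lift Δt xb).const_mul ηp
    · exact (measurable_const.mul hdtm.abs).mul (measurable_lift Δt xr)
    · exact measurable_lift Δt d
  have hAbd : ∀ s, |A s| ≤ ηp * Bb + ηp * Br + Bd := fun s =>
    abs_A_le hηp.le (lift_abs_le hK hBb s) (lift_abs_le hK hBr s) (hdtb s)
      (lift_abs_le hK hBd s)
  have hAInt : ∀ a b : ℝ, IntervalIntegrable A volume a b := II_of_bound _ hAmeas hAbd
  set f := socIntegrand ηp ηm (lift Δt xb) (lift Δt xr) dt (lift Δt d) with hf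
  have hfmeas : Measurable f :=
    measurable_socIntegrand (measurable_lift Δt xb) (measurable_lift Δt xr) hdtm
      (measurable_lift Δt d)
  have hfbd : ∀ s, |f s| ≤ ηp * (Bb + Br) + (1 / ηm) * (Bb + Br) + Bd := fun s =>
    abs_socIntegrand_le hηp.le hηm (lift_abs_le hK hBb s) (lift_abs_le hK hBr s) (hdtb s)
      (lift_abs_le hK hBd s)
  have hfInt : ∀ a b : ℝ, IntervalIntegrable f volume a b := II_of_bound _ hfmeas hfbd
  have hfA : ∀ s, f s ≤ A s := by
    intro s
    have := key_ineq (ηp := ηp) (ηm := ηm) (X := lift Δt xb s) (R := lift Δt xr s)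
      (z := dt s) hηp.le hηm (lift_nonneg hK hxb s) (lift_nonneg hK hxr s)
    rw [hf, socIntegrand, hA]
    simp only []
    linarith
  set Y : ℝ → ℝ := fun u => y0 + ∫ s in (0:ℝ)..u, A s with hY
  have hsocY : soc ηp ηm (lift Δt xb) (lift Δt xr) dt (lift Δt d) y0 t ≤ Y t := by
    rw [soc, hY]
    have := intervalIntegral.integral_mono_on ht.1 (hfInt 0 t) (hAInt 0 t)
      (fun x _ => hfA x)
    simp only []
    linarith
  have hYdiff : ∀ a b : ℝ, Y b - Y a = ∫ s in a..b, A s := by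
    intro a b
    rw [hY]
    simp only []
    rw [add_sub_add_left_eq_sub]
    exact intervalIntegral.integral_interval_sub_left (hAInt 0 b) (hAInt 0 a)
  -- the interval averages
  set J : ℕ → ℝ := fun l => ∫ s in ((l : ℝ) * Δt)..(((l : ℝ) + 1) * Δt), |dt s| with hJ
  have hdtaInt : ∀ a b : ℝ, IntervalIntegrable (fun s => |dt s|) volume a b :=
    II_of_bound 1 hdtm.abs (fun x => by rw [abs_abs]; exact hdtb x)
  have hJ0 : ∀ l, 0 ≤ J l := by
    intro l
    apply intervalIntegral.integral_nonneg (by nlinarith) (fun u _ => abs_nonneg _)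
  have hJ1 : ∀ l, J l ≤ Δt := by
    intro l
    have := intervalIntegral.integral_mono_on (by nlinarith : (l:ℝ)*Δt ≤ ((l:ℝ)+1)*Δt)
      (hdtaInt _ _) (intervalIntegrable_const (c := (1:ℝ))) (fun x _ => hdtb x)
    rw [intervalIntegral.integral_const, smul_eq_mul] at this
    calc J l ≤ (((l:ℝ)+1)*Δt - (l:ℝ)*Δt) * 1 := this
      _ = Δt := by ring
  set dbar : Fin K → ℝ := fun l => (1 / Δt) * J (l : ℕ) with hdbar
  have hdbar0 : ∀ l, 0 ≤ dbar l := fun l =>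
    mul_nonneg (by positivity) (hJ0 _)
  have hdbar1 : ∀ l, dbar l ≤ 1 := by
    intro l
    rw [hdbar]
    simp only []
    rw [div_mul_eq_mul_div, one_mul, div_le_one hΔt]
    exact hJ1 l
  -- piece values of A
  have pieceA : ∀ {l : ℕ} (hl : l < K),
      (∫ s in ((l : ℝ) * Δt)..(((l : ℝ) + 1) * Δt), A s)
        = Δt * (ηp * xb ⟨l, hl⟩ - d ⟨l, hl⟩) + ηp * xr ⟨l, hl⟩ * J l := by
    intro l hl
    have h1' : (l : ℝ) * Δt ≤ ((l : ℝ) + 1) * Δt := by nlinarith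
    have hcongr : ∀ x ∈ Ico ((l : ℝ) * Δt) (((l : ℝ) + 1) * Δt),
        A x = (ηp * xb ⟨l, hl⟩ - d ⟨l, hl⟩) + (ηp * xr ⟨l, hl⟩) * |dt x| := by
      intro x hx
      rw [hA]
      simp only []
      rw [lift_eq hΔt xb hl hx.1 hx.2, lift_eq hΔt xr hl hx.1 hx.2,
        lift_eq hΔt d hl hx.1 hx.2]
      ring
    rw [integral_congr_Ico h1' hcongr, intervalIntegral.integral_add
      (intervalIntegrable_const) ((hdtaInt _ _).const_mul _),
      intervalIntegral.integral_const, intervalIntegral.integral_const_mul, smul_eq_mul]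
    rw [hJ]
    ring
  -- dbar is in DK
  have hdbarDK : dbar ∈ DK K W g := by
    constructor
    · intro l
      rw [abs_of_nonneg (hdbar0 l)]
      exact hdbar1 l
    · intro k
      have hk1K : (k : ℕ) + 1 ≤ K := k.isLt
      have hfilt : (Finset.univ.filter
            (fun l : Fin K => (k : ℕ) + 1 - W ≤ (l : ℕ) ∧ (l : ℕ) ≤ (k : ℕ)))
          = (Finset.univ.filter
            (fun l : Fin K => ((k : ℕ) + 1 - W : ℕ) ≤ (l : ℕ) ∧ (l : ℕ) < (k : ℕ) + 1)) := by
        ext l; simp only [Finset.mem_filter, Finset.mem_univ, true_and]; omega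
      have habsdbar : ∀ l : Fin K, |dbar l| = (fun n => (1 / Δt) * J n) (l : ℕ) := by
        intro l
        rw [abs_of_nonneg (hdbar0 l)]
      rw [hfilt, sum_fin_filter _ (fun n => (1 / Δt) * J n) habsdbar _ _ hk1K]
      set a := (k : ℕ) + 1 - W with haa
      have hsum : ∑ l ∈ Finset.Ico a ((k : ℕ) + 1), (1 / Δt) * J l
          = (1 / Δt) * ∫ s in ((a : ℝ) * Δt)..((((k : ℕ) + 1 : ℕ) : ℝ) * Δt), |dt s| := by
        rw [integral_Ico_sum hdtaInt (by omega : a ≤ (k : ℕ) + 1), Finset.mul_sum]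
      rw [hsum]
      -- compare with the continuous window constraint at t0
      set t0 : ℝ := (((k : ℕ) + 1 : ℕ) : ℝ) * Δt with ht0def
      have ht0T : t0 ∈ Icc (0:ℝ) T := by
        constructor
        · positivity
        · rw [hT]
          apply mul_le_mul_of_nonneg_right _ hΔt.le
          exact_mod_cast hk1K
      have hwin := hδw t0 ht0T
      have hmax : max (t0 - Γ) 0 = (a : ℝ) * Δt := by
        rw [hΓ, ht0def, haa]
        by_cases hcase : (k : ℕ) + 1 ≤ W
        · have h0 : ((k : ℕ) + 1 - W : ℕ) = 0 := by omega
          rw [h0]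
          push_cast
          have : ((k : ℕ) + 1 : ℝ) ≤ (W : ℝ) := by exact_mod_cast hcase
          rw [max_eq_right (by nlinarith)]
          ring
        · rw [Nat.cast_sub (by omega : W ≤ (k : ℕ) + 1)]
          push_cast
          rw [max_eq_left (by nlinarith [(by exact_mod_cast (by omega : W ≤ (k:ℕ)+1) :
            (W : ℝ) ≤ ((k : ℕ) : ℝ) + 1)])]
          ring
      have hcong2 : (∫ s in ((a : ℝ) * Δt)..t0, |dt s|) = ∫ s in ((a : ℝ) * Δt)..t0, |δ s| := by
        apply intervalIntegral.integral_congr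
        intro x hx
        have hat0 : (a : ℝ) * Δt ≤ t0 := by
          rw [ht0def]
          apply mul_le_mul_of_nonneg_right _ hΔt.le
          exact_mod_cast (by omega : a ≤ (k : ℕ) + 1)
        rw [uIcc_of_le hat0] at hx
        have hxT : x ∈ Icc (0:ℝ) T := by
          constructor
          · exact le_trans (by positivity) hx.1
          · exact le_trans hx.2 ht0T.2
        show |dt x| = |δ x|
        rw [hdteq x hxT]
      rw [← hmax] at hcong2 ⊢
      rw [hcong2]
      calc (1 / Δt) * ∫ s in (max (t0 - Γ) 0)..t0, |δ s|
          ≤ (1 / Δt) * γ := by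
            apply mul_le_mul_of_nonneg_left hwin (by positivity)
        _ = (g : ℝ) := by rw [hγ]; field_simp
  -- find the grid point dominating Y t
  obtain ⟨m, hmK, hm1, hm2⟩ := exists_grid hΔt hK ht.1 (hT ▸ ht.2)
  have hstep : ∃ k ≤ K, Y t ≤ Y ((k : ℝ) * Δt) := by
    rcases hdx ⟨m, hmK⟩ with hcase | hcase
    · refine ⟨m + 1, by omega, ?_⟩
      have hdiff := hYdiff t (((m + 1 : ℕ) : ℝ) * Δt)
      have hcast : ((m + 1 : ℕ) : ℝ) * Δt = ((m : ℝ) + 1) * Δt := by push_cast; ring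
      have hnn : 0 ≤ ∫ s in t..(((m + 1 : ℕ) : ℝ) * Δt), A s := by
        rw [hcast]
        have hcongr : ∀ x ∈ Ico t (((m : ℝ) + 1) * Δt),
            A x = ηp * xb ⟨m, hmK⟩ + ηp * |dt x| * xr ⟨m, hmK⟩ := by
          intro x hx
          show ηp * lift Δt xb x + ηp * |dt x| * lift Δt xr x - lift Δt d x = _
          rw [lift_eq hΔt xb hmK (le_trans hm1 hx.1) hx.2,
            lift_eq hΔt xr hmK (le_trans hm1 hx.1) hx.2,
            lift_eq hΔt d hmK (le_trans hm1 hx.1) hx.2, hcase]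
          ring
        rw [integral_congr_Ico hm2 hcongr]
        apply intervalIntegral.integral_nonneg hm2
        intro u _
        have h1 := abs_nonneg (dt u)
        have h2 := hxb ⟨m, hmK⟩
        have h3 := hxr ⟨m, hmK⟩
        positivity
      linarith
    · refine ⟨m, by omega, ?_⟩
      have hdiff := hYdiff ((m : ℝ) * Δt) t
      have hval : (∫ s in ((m : ℝ) * Δt)..t, A s) = (t - (m : ℝ) * Δt) * (-(d ⟨m, hmK⟩)) := by
        have hcongr : ∀ x ∈ Ico ((m : ℝ) * Δt) t, A x = -(d ⟨m, hmK⟩) := by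
          intro x hx
          show ηp * lift Δt xb x + ηp * |dt x| * lift Δt xr x - lift Δt d x = _
          rw [lift_eq hΔt xb hmK hx.1 (lt_of_lt_of_le hx.2 hm2),
            lift_eq hΔt xr hmK hx.1 (lt_of_lt_of_le hx.2 hm2),
            lift_eq hΔt d hmK hx.1 (lt_of_lt_of_le hx.2 hm2), hcase.1, hcase.2]
          ring
        rw [integral_congr_Ico hm1 hcongr, intervalIntegral.integral_const, smul_eq_mul]
      have : (∫ s in ((m : ℝ) * Δt)..t, A s) ≤ 0 := by
        rw [hval]
        have := hd ⟨m, hmK⟩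
        nlinarith
      linarith
  obtain ⟨k, hkK, hYk⟩ := hstep
  refine ⟨dbar, hdbarDK, k, hkK, ?_⟩
  -- evaluate Y at grid point and identify with ysoc
  have hcY : ∀ (n : ℕ) (h : n < K), (fun n : ℕ => if h : n < K then
      Δt * (ηp * xb ⟨n, h⟩ - d ⟨n, h⟩) + ηp * xr ⟨n, h⟩ * J n else 0) n
      = Δt * (ηp * xb ⟨n, h⟩ - d ⟨n, h⟩) + ηp * xr ⟨n, h⟩ * J n := fun n h => dif_pos h
  set cY : ℕ → ℝ := fun n => if h : n < K then
      Δt * (ηp * xb ⟨n, h⟩ - d ⟨n, h⟩) + ηp * xr ⟨n, h⟩ * J n else 0 with hcYdef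
  have hYgrid : Y ((k : ℝ) * Δt) = ysoc Δt ηp ηm xb xr dbar d y0 k := by
    have hgrid : Y ((k : ℝ) * Δt) = y0 + ∑ l ∈ Finset.range k, cY l := by
      show y0 + (∫ s in (0:ℝ)..((k : ℝ) * Δt), A s) = _
      rw [grid_sum hAInt k]
      congr 1
      apply Finset.sum_congr rfl
      intro l hl
      have hlK : l < K := lt_of_lt_of_le (Finset.mem_range.mp hl) hkK
      rw [pieceA hlK, hcY l hlK]
    rw [hgrid, ysoc]
    have hff : ∀ l : Fin K,
        (ηp * max (xb l + dbar l * xr l) 0 - (1 / ηm) * max (-(xb l + dbar l * xr l)) 0 - d l)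
          = cY (l : ℕ) / Δt := by
      intro l
      rw [key_eq (ηp := ηp) (ηm := ηm) (hxb l) (hxr l) (hdbar0 l), hcY _ l.isLt]
      simp only [Fin.eta]
      have hdb : dbar l = (1 / Δt) * J (l : ℕ) := rfl
      rw [hdb]
      field_simp
      ring
    rw [filter_lt_eq, Finset.sum_congr rfl (fun l _ => hff l),
      sum_fin_filter (fun l : Fin K => cY (l : ℕ) / Δt) (fun n => cY n / Δt)
        (fun l => rfl) 0 k hkK, ← Finset.range_eq_Ico, Finset.mul_sum]
    congr 1
    apply Finset.sum_congr rfl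
    intro l _
    field_simp
  rw [hsoceq]
  calc soc ηp ηm (lift Δt xb) (lift Δt xr) dt (lift Δt d) y0 t ≤ Y t := hsocY
    _ ≤ Y ((k : ℝ) * Δt) := hYk
    _ = ysoc Δt ηp ηm xb xr dbar d y0 k := hYgrid

end Stmt8Aux

open Stmt8Aux in
/-- Proposition 6: the continuous robust upper bound on the
state-of-charge is equivalent to its discrete counterpart, and the worst-case
suprema coincide. -/
theorem stmt_8 (Δt : ℝ) (K W g : ℕ) (hΔt : 0 < Δt)
    (hg : 0 < g) (hgW : g ≤ W) (hWK : W ≤ K)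
    (T Γ γ : ℝ) (hT : T = K * Δt) (hΓ : Γ = W * Δt) (hγ : γ = g * Δt)
    (ηp ηm : ℝ) (hηp : ηp ∈ Ioc (0:ℝ) 1) (hηm : ηm ∈ Ioc (0:ℝ) 1)
    (xb xr d : Fin K → ℝ)
    (hxb : ∀ l, 0 ≤ xb l) (hxr : ∀ l, 0 ≤ xr l) (hd : ∀ l, 0 ≤ d l)
    (hdx : ∀ l, d l = 0 ∨ (xb l = 0 ∧ xr l = 0))
    (y0 ybar : ℝ) :
    ((∀ δ ∈ Dset T Γ γ, ∀ t ∈ Icc (0:ℝ) T,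
        soc ηp ηm (lift Δt xb) (lift Δt xr) δ (lift Δt d) y0 t ≤ ybar) ↔
      (∀ δv ∈ DK K W g, ∀ k ≤ K, ysoc Δt ηp ηm xb xr δv d y0 k ≤ ybar)) ∧
    sSup {v : ℝ | ∃ δ ∈ Dset T Γ γ, ∃ t ∈ Icc (0:ℝ) T,
        v = soc ηp ηm (lift Δt xb) (lift Δt xr) δ (lift Δt d) y0 t} =
      sSup {v : ℝ | ∃ δv ∈ DK K W g, ∃ k ≤ K, v = ysoc Δt ηp ηm xb xr δv d y0 k} := by
  obtain ⟨hηp0, hηp1⟩ := hηp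
  obtain ⟨hηm0, hηm1⟩ := hηm
  have hK : 0 < K := by omega
  have hT0 : (0:ℝ) ≤ T := by rw [hT]; positivity
  -- the two sets
  set S1 := {v : ℝ | ∃ δ ∈ Dset T Γ γ, ∃ t ∈ Icc (0:ℝ) T,
      v = soc ηp ηm (lift Δt xb) (lift Δt xr) δ (lift Δt d) y0 t} with hS1
  set S2 := {v : ℝ | ∃ δv ∈ DK K W g, ∃ k ≤ K, v = ysoc Δt ηp ηm xb xr δv d y0 k} with hS2
  -- zero elements
  have hzero1 : (fun _ : ℝ => (0:ℝ)) ∈ Dset T Γ γ := by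
    refine ⟨measurable_const, fun t _ => by norm_num, fun t _ => ?_⟩
    simp only [abs_zero]
    rw [intervalIntegral.integral_zero, hγ]
    positivity
  have hzero2 : (fun _ : Fin K => (0:ℝ)) ∈ DK K W g := by
    refine ⟨fun l => by norm_num, fun k => ?_⟩
    simp only [abs_zero, Finset.sum_const_zero]
    positivity
  have hne1 : S1.Nonempty :=
    ⟨_, ⟨_, hzero1, 0, ⟨le_refl 0, hT0⟩, rfl⟩⟩
  have hne2 : S2.Nonempty :=
    ⟨_, ⟨_, hzero2, 0, Nat.zero_le K, rfl⟩⟩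
  -- uniform upper bound for S2
  set M : ℝ := y0 + Δt * ∑ l : Fin K, ηp * (xb l + xr l) with hM
  have hM2 : ∀ δv ∈ DK K W g, ∀ k ≤ K, ysoc Δt ηp ηm xb xr δv d y0 k ≤ M := by
    intro δv hδv k hk
    rw [ysoc, hM]
    have hterm : ∀ l : Fin K,
        (ηp * max (xb l + δv l * xr l) 0 - (1 / ηm) * max (-(xb l + δv l * xr l)) 0 - d l)
          ≤ ηp * (xb l + xr l) := by
      intro l
      have h1 := key_ineq (ηp := ηp) (ηm := ηm) (z := δv l) hηp0.le hηm0 (hxb l) (hxr l)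
      have h2 : ηp * (xb l + |δv l| * xr l) ≤ ηp * (xb l + xr l) := by
        apply mul_le_mul_of_nonneg_left _ hηp0.le
        have := mul_le_mul_of_nonneg_right (hδv.1 l) (hxr l)
        linarith [this]
      have := hd l
      linarith
    have hs1 := Finset.sum_le_sum (fun l (_ : l ∈ Finset.univ.filter
      (fun l : Fin K => (l : ℕ) < k)) => hterm l)
    have hs2 : ∑ l ∈ Finset.univ.filter (fun l : Fin K => (l : ℕ) < k), ηp * (xb l + xr l)
        ≤ ∑ l : Fin K, ηp * (xb l + xr l) := by
      apply Finset.sum_le_sum_of_subset_of_nonneg (Finset.filter_subset _ _)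
      intro i _ _
      have := hxb i; have := hxr i
      positivity
    have := le_trans hs1 hs2
    nlinarith [mul_le_mul_of_nonneg_left this hΔt.le]
  have hfwd := fun δv hδv k hk => forward hΔt hg hgW hWK hT hΓ hγ hηp0 hηm0 xb xr d hxb hxr
    y0 δv hδv k hk
  have hbwd := fun δ hδ t ht => backward hΔt hg hgW hWK hT hΓ hγ hηp0 hηm0 xb xr d hxb hxr hd
    hdx y0 δ hδ t ht
  have hM1 : ∀ v ∈ S1, v ≤ M := by
    rintro v ⟨δ, hδ, t, ht, rfl⟩
    obtain ⟨δv, hδv, k, hk, hle⟩ := hbwd δ hδ t ht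
    exact le_trans hle (hM2 δv hδv k hk)
  have hbdd1 : BddAbove S1 := ⟨M, hM1⟩
  have hbdd2 : BddAbove S2 := ⟨M, by rintro v ⟨δv, hδv, k, hk, rfl⟩; exact hM2 δv hδv k hk⟩
  constructor
  · constructor
    · intro hcont δv hδv k hk
      obtain ⟨δ, hδ, t, ht, hle⟩ := hfwd δv hδv k hk
      exact le_trans hle (hcont δ hδ t ht)
    · intro hdisc δ hδ t ht
      obtain ⟨δv, hδv, k, hk, hle⟩ := hbwd δ hδ t ht
      exact le_trans hle (hdisc δv hδv k hk)
  · apply le_antisymm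
    · apply csSup_le hne1
      rintro v ⟨δ, hδ, t, ht, rfl⟩
      obtain ⟨δv, hδv, k, hk, hle⟩ := hbwd δ hδ t ht
      exact le_trans hle (le_csSup hbdd2 ⟨δv, hδv, k, hk, rfl⟩)
    · apply csSup_le hne2
      rintro v ⟨δv, hδv, k, hk, rfl⟩
      obtain ⟨δ, hδ, t, ht, hle⟩ := hfwd δv hδv k hk
      exact le_trans hle (le_csSup hbdd1 ⟨δ, hδ, t, ht, rfl⟩)
end
end
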